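/- arXiv:2207.03062 — 8 statements merged into one kernel-verified Lean document; each statement's English description precedes it below -/
import Mathlib

section
/- For a connected orthogonal convex shape S, the function x ↦ y_max(x) (the maximum y-coordinate of column c_x, over nonempty columns) is unimodal: there do not exist columns x1 < x2 < x3, all nonempty, with y_max(x1) > y_max(x2) and y_max(x3) > y_max(x2). -/
/-!
Let `m` be the top of the middle column `x₂`. The topmost cells of columns `x₁` and `x₃` lie
above row `m`, and a path in `S` between them must come down to row `m` before crossing column
`x₂`, since that column has no cell above `m`. The last step down on each side leaves from a cell
of row `m + 1`, so that row meets `S` on both sides of `x₂`, and row convexity puts `(x₂, m + 1)`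
in `S`, above the top of column `x₂`.
-/

def Adjacent (p q : ℤ × ℤ) : Prop :=
  (p.1 = q.1 ∧ (p.2 = q.2 + 1 ∨ q.2 = p.2 + 1)) ∨
  (p.2 = q.2 ∧ (p.1 = q.1 + 1 ∨ q.1 = p.1 + 1))

def ShapeConnected (S : Finset (ℤ × ℤ)) : Prop :=
  ∀ p ∈ S, ∀ q ∈ S,
    Relation.ReflTransGen (fun a b => a ∈ S ∧ b ∈ S ∧ Adjacent a b) p q

def OrthoConvex (S : Finset (ℤ × ℤ)) : Prop :=
  (∀ p ∈ S, ∀ q ∈ S, p.1 = q.1 → ∀ y : ℤ,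
      min p.2 q.2 < y → y < max p.2 q.2 → (p.1, y) ∈ S) ∧
  (∀ p ∈ S, ∀ q ∈ S, p.2 = q.2 → ∀ x : ℤ,
      min p.1 q.1 < x → x < max p.1 q.1 → (x, p.2) ∈ S)


/-- The set of y-coordinates of the column of `S` at abscissa `x`. -/
def col (S : Finset (ℤ × ℤ)) (x : ℤ) : Finset ℤ :=
  (S.filter (fun p => p.1 = x)).image Prod.snd

theorem Relation.ReflTransGen.exists_step_of_not {α : Type*} {r : α → α → Prop} {P : α → Prop}
    {a b : α} (h : Relation.ReflTransGen r a b) (ha : P a) (hb : ¬ P b) :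
    ∃ c d, r c d ∧ P c ∧ ¬ P d := by
  induction h with
  | refl => exact absurd ha hb
  | @tail c d _ hcd ih =>
    by_cases hc : P c
    · exact ⟨c, d, hcd, hc, hb⟩
    · exact ih hc

lemma mem_col {S : Finset (ℤ × ℤ)} {x y : ℤ} : y ∈ col S x ↔ (x, y) ∈ S := by
  simp [col]

lemma le_max'_col {S : Finset (ℤ × ℤ)} {x y : ℤ} (h : (col S x).Nonempty) (hy : (x, y) ∈ S) :
    y ≤ (col S x).max' h :=
  (col S x).le_max' y (mem_col.mpr hy)

lemma mk_max'_col_mem {S : Finset (ℤ × ℤ)} {x : ℤ} (h : (col S x).Nonempty) :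
    (x, (col S x).max' h) ∈ S :=
  mem_col.mp ((col S x).max'_mem h)

lemma exists_mem_row_succ_of_path {S : Finset (ℤ × ℤ)} {x₀ m : ℤ}
    (hcol : ∀ c ∈ S, c.1 = x₀ → c.2 ≤ m) {p q : ℤ × ℤ}
    (hpq : Relation.ReflTransGen (fun a b => a ∈ S ∧ b ∈ S ∧ Adjacent a b) p q)
    (hp : m < p.2) (hside : (p.1 < x₀ ∧ x₀ < q.1) ∨ (x₀ < p.1 ∧ q.1 < x₀)) :
    ∃ a ∈ S, ((a.1 < x₀ ∧ p.1 < x₀) ∨ (x₀ < a.1 ∧ x₀ < p.1)) ∧ a.2 = m + 1 := by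
  let P : ℤ × ℤ → Prop := fun c => m < c.2 ∧ ((c.1 < x₀ ∧ p.1 < x₀) ∨ (x₀ < c.1 ∧ x₀ < p.1))
  obtain ⟨a, b, ⟨ha, hb, hab⟩, ⟨hma, hsa⟩, hb_out⟩ :=
    hpq.exists_step_of_not (P := P) ⟨hp, by omega⟩ (by simp only [P]; omega)
  have hb_col := hcol b hb
  refine ⟨a, ha, hsa, ?_⟩
  simp only [P, Adjacent] at hab hb_out
  omega

/-- The column maxima of a connected orthogonal convex shape are unimodal. -/
theorem stmt2 (S : Finset (ℤ × ℤ)) (hc : ShapeConnected S) (ho : OrthoConvex S) :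
    ¬ ∃ (x₁ x₂ x₃ : ℤ) (h₁ : (col S x₁).Nonempty) (h₂ : (col S x₂).Nonempty)
        (h₃ : (col S x₃).Nonempty),
      x₁ < x₂ ∧ x₂ < x₃ ∧
      (col S x₂).max' h₂ < (col S x₁).max' h₁ ∧
      (col S x₂).max' h₂ < (col S x₃).max' h₃ := by
  rintro ⟨x₁, x₂, x₃, h₁, h₂, h₃, h12, h23, hm1, hm3⟩
  set m := (col S x₂).max' h₂
  have hcol : ∀ c ∈ S, c.1 = x₂ → c.2 ≤ m := fun c hc hcx =>
    le_max'_col h₂ (by rw [← hcx]; exact hc)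
  have hp₁ := mk_max'_col_mem h₁
  have hp₃ := mk_max'_col_mem h₃
  obtain ⟨a, ha, hax, hay⟩ :=
    exists_mem_row_succ_of_path hcol (hc _ hp₁ _ hp₃) hm1 (Or.inl ⟨h12, h23⟩)
  obtain ⟨b, hb, hbx, hby⟩ :=
    exists_mem_row_succ_of_path hcol (hc _ hp₃ _ hp₁) hm3 (Or.inr ⟨h23, h12⟩)
  have hmid : (x₂, m + 1) ∈ S := hay ▸ ho.2 a ha b hb (by omega) x₂ (by omega) (by omega)
  have := hcol _ hmid rfl
  omega
end

section
/- For all n ≥ 3, the maximum possible absolute colour-difference (|#blacks − #reds| under a chessboard colouring) of a connected orthogonal convex shape of n cells is n − 2⌊n/3⌋. -/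
/-- Number of black cells (coordinate sum even). -/
def bcount (S : Finset (ℤ × ℤ)) : ℕ := (S.filter (fun p => (p.1 + p.2) % 2 = 0)).card

/-- Number of red cells (coordinate sum odd). -/
def rcount (S : Finset (ℤ × ℤ)) : ℕ := (S.filter (fun p => (p.1 + p.2) % 2 ≠ 0)).card



lemma filter_split_card (S : Finset (ℤ × ℤ)) (c : ℤ × ℤ → Prop) [DecidablePred c] (Y : ℤ) :
    (S.filter c).card =
      ((S.filter (fun p => p.2 = Y)).filter c).card +
      ((S.filter (fun p => p.2 ≠ Y)).filter c).card := by
  have h1 : (S.filter c).filter (fun p => p.2 = Y) = (S.filter (fun p => p.2 = Y)).filter c :=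
    Finset.filter_comm _ _ _
  have h2 : (S.filter c).filter (fun p => ¬ p.2 = Y) = (S.filter (fun p => p.2 ≠ Y)).filter c :=
    Finset.filter_comm _ _ _
  rw [← h1, ← h2]
  exact (Finset.card_filter_add_card_filter_not (fun p : ℤ × ℤ => p.2 = Y)).symm

lemma bcount_split (S : Finset (ℤ × ℤ)) (Y : ℤ) :
    bcount S = bcount (S.filter (fun p => p.2 = Y)) + bcount (S.filter (fun p => p.2 ≠ Y)) :=
  filter_split_card S _ Y

lemma rcount_split (S : Finset (ℤ × ℤ)) (Y : ℤ) :
    rcount S = rcount (S.filter (fun p => p.2 = Y)) + rcount (S.filter (fun p => p.2 ≠ Y)) :=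
  filter_split_card S _ Y

lemma card_split (S : Finset (ℤ × ℤ)) (Y : ℤ) :
    S.card = (S.filter (fun p => p.2 = Y)).card + (S.filter (fun p => p.2 ≠ Y)).card :=
  (Finset.card_filter_add_card_filter_not _).symm

lemma Icc_insert (l r : ℤ) (h : l ≤ r) :
    Finset.Icc l r = insert l (Finset.Icc (l+1) r) := by
  ext x; simp only [Finset.mem_Icc, Finset.mem_insert]; omega

lemma row_inj (Y : ℤ) : Function.Injective (fun x : ℤ => (x, Y)) := fun a b h => by simpa using h

lemma bcount_image_row (l r Y : ℤ) :
    bcount ((Finset.Icc l r).image (fun x => ((x : ℤ), Y))) =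
      ((Finset.Icc l r).filter (fun x => (x + Y) % 2 = 0)).card := by
  unfold bcount
  rw [Finset.filter_image]
  exact Finset.card_image_of_injective _ (row_inj Y)

lemma rcount_image_row (l r Y : ℤ) :
    rcount ((Finset.Icc l r).image (fun x => ((x : ℤ), Y))) =
      ((Finset.Icc l r).filter (fun x => ¬ (x + Y) % 2 = 0)).card := by
  unfold rcount
  rw [Finset.filter_image]
  exact Finset.card_image_of_injective _ (row_inj Y)

lemma card_image_row (l r Y : ℤ) (h : l ≤ r) :
    (((Finset.Icc l r).image (fun x => ((x : ℤ), Y))).card : ℤ) = r - l + 1 := by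
  rw [Finset.card_image_of_injective _ (row_inj Y)]
  simp [Int.card_Icc]
  omega

lemma row_diff (d : ℕ) : ∀ l Y : ℤ,
    (((Finset.Icc l (l + d)).filter (fun x => (x + Y) % 2 = 0)).card : ℤ) -
      ((Finset.Icc l (l + d)).filter (fun x => ¬ (x + Y) % 2 = 0)).card =
    if (d : ℤ) % 2 = 0 then (if (l + Y) % 2 = 0 then 1 else -1) else 0 := by
  induction d with
  | zero =>
    intro l Y
    simp only [Nat.cast_zero, add_zero, Finset.Icc_self, Finset.filter_singleton]
    split_ifs <;> simp_all
  | succ d ih =>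
    intro l Y
    have hins : Finset.Icc l (l + (d+1:ℕ)) = insert l (Finset.Icc (l+1) (l+1+d)) := by
      rw [Icc_insert _ _ (by push_cast; omega)]
      congr 1; push_cast; ring_nf
    rw [hins]
    have hnot : l ∉ Finset.Icc (l+1) (l+1+(d:ℤ)) := by simp
    rw [Finset.filter_insert, Finset.filter_insert]
    have ih' := ih (l+1) Y
    by_cases h : (l + Y) % 2 = 0
    · have h2 : ¬ ((l+1) + Y) % 2 = 0 := by omega
      rw [if_pos h, if_neg (by simpa using h)]
      rw [Finset.card_insert_of_notMem (by simpa using hnot)]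
      split_ifs at ih' ⊢ <;> push_cast at * <;> omega
    · have h2 : ((l+1) + Y) % 2 = 0 := by omega
      rw [if_neg h, if_pos (by simpa using h)]
      rw [Finset.card_insert_of_notMem (by simpa using hnot)]
      split_ifs at ih' ⊢ <;> push_cast at * <;> omega

lemma adjacent_symm {p q : ℤ × ℤ} (h : Adjacent p q) : Adjacent q p := by
  unfold Adjacent at *; tauto

lemma rel_symm (S : Finset (ℤ × ℤ)) :
    Symmetric (fun a b => a ∈ S ∧ b ∈ S ∧ Adjacent a b) := by
  intro a b ⟨h1, h2, h3⟩; exact ⟨h2, h1, adjacent_symm h3⟩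

/-- crossing lemma: a path from level ≤ y to level > y crosses via a vertical edge. -/
lemma crossing {S : Finset (ℤ × ℤ)} {p q : ℤ × ℤ} {y : ℤ}
    (h : Relation.ReflTransGen (fun a b => a ∈ S ∧ b ∈ S ∧ Adjacent a b) p q)
    (hp : p.2 ≤ y) (hq : y < q.2) :
    ∃ x : ℤ, (x, y) ∈ S ∧ (x, y + 1) ∈ S := by
  induction h with
  | refl => omega
  | tail _ step ih =>
    rename_i b c _
    obtain ⟨hb, hc, hadj⟩ := step
    by_cases hby : b.2 ≤ y
    · -- edge b-c crosses
      rcases hadj with ⟨hx, hv⟩ | ⟨hy2, _⟩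
      · have hb2 : b.2 = y := by omega
        have hc2 : c.2 = y + 1 := by omega
        refine ⟨b.1, ?_, ?_⟩
        · rw [← hb2]; exact hb
        · have : c = (b.1, y+1) := by
            cases c; cases b; simp_all
          rw [← this]; exact hc
      · omega
    · exact ih (by omega)

/-- walking along a full row. -/
lemma row_walk {S : Finset (ℤ × ℤ)}
    (hrows : ∀ y x1 x2 x : ℤ, (x1, y) ∈ S → (x2, y) ∈ S → x1 ≤ x → x ≤ x2 → (x, y) ∈ S)
    {y x1 x2 : ℤ} (h1 : (x1, y) ∈ S) (h2 : (x2, y) ∈ S) (hle : x1 ≤ x2) :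
    Relation.ReflTransGen (fun a b => a ∈ S ∧ b ∈ S ∧ Adjacent a b) (x1, y) (x2, y) := by
  refine Int.le_induction (motive := fun z _ =>
    (z, y) ∈ S → Relation.ReflTransGen (fun a b => a ∈ S ∧ b ∈ S ∧ Adjacent a b) (x1, y) (z, y))
    ?_ ?_ x2 hle h2
  · intro _; exact Relation.ReflTransGen.refl
  · intro z hz ih hmem
    have hzmem : (z, y) ∈ S := hrows y x1 (z+1) z h1 hmem (by omega) (by omega)
    exact (ih hzmem).tail ⟨hzmem, hmem, Or.inr ⟨rfl, Or.inr rfl⟩⟩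

/-- structure implies connectivity. -/
lemma structure_connected {S : Finset (ℤ × ℤ)}
    (hrows : ∀ y x1 x2 x : ℤ, (x1, y) ∈ S → (x2, y) ∈ S → x1 ≤ x → x ≤ x2 → (x, y) ∈ S)
    (hshare : ∀ y : ℤ, (∃ a, (a, y) ∈ S) → (∃ b, (b, y+1) ∈ S) →
      ∃ x, (x, y) ∈ S ∧ (x, y+1) ∈ S)
    (hbetween : ∀ p ∈ S, ∀ q ∈ S, ∀ y : ℤ, p.2 ≤ y → y ≤ q.2 → ∃ a, (a, y) ∈ S) :
    ShapeConnected S := by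
  have walk : ∀ {u v : ℤ}, u ≤ v → ∀ x1 x2 : ℤ, (x1, u) ∈ S → (x2, v) ∈ S →
      Relation.ReflTransGen (fun a b => a ∈ S ∧ b ∈ S ∧ Adjacent a b) (x1, u) (x2, v) := by
    intro u v huv
    refine Int.le_induction (motive := fun v _ =>
      ∀ x1 x2 : ℤ, (x1, u) ∈ S → (x2, v) ∈ S →
      Relation.ReflTransGen (fun a b => a ∈ S ∧ b ∈ S ∧ Adjacent a b) (x1, u) (x2, v))
      ?_ ?_ v huv
    · intro x1 x2 h1 h2
      rcases le_total x1 x2 with h | h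
      · exact row_walk hrows h1 h2 h
      · exact (@Std.Symm.symm _ _ (@Relation.ReflTransGen.stdSymm _ _ ⟨fun a b h => rel_symm S h⟩) _ _) (row_walk hrows h2 h1 h)
    · intro v hv ih x1 x2 h1 h2
      obtain ⟨x, hx1, hx2⟩ := hshare v (hbetween _ h1 _ h2 v hv (by omega)) ⟨x2, h2⟩
      have t1 := ih x1 x h1 hx1
      have t2 : Relation.ReflTransGen (fun a b => a ∈ S ∧ b ∈ S ∧ Adjacent a b)
          (x, v) (x, v+1) := Relation.ReflTransGen.single ⟨hx1, hx2, Or.inl ⟨rfl, Or.inr rfl⟩⟩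
      have t3 : Relation.ReflTransGen (fun a b => a ∈ S ∧ b ∈ S ∧ Adjacent a b)
          (x, v+1) (x2, v+1) := by
        rcases le_total x x2 with h | h
        · exact row_walk hrows hx2 h2 h
        · exact (@Std.Symm.symm _ _ (@Relation.ReflTransGen.stdSymm _ _ ⟨fun a b h => rel_symm S h⟩) _ _) (row_walk hrows h2 hx2 h)
      exact (t1.trans t2).trans t3
  intro p hp q hq
  rcases le_total p.2 q.2 with h | h
  · have := walk h p.1 q.1 (by simpa using hp) (by simpa using hq)
    simpa using this
  · have := walk h q.1 p.1 (by simpa using hq) (by simpa using hp)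
    exact (@Std.Symm.symm _ _ (@Relation.ReflTransGen.stdSymm _ _ ⟨fun a b h => rel_symm S h⟩) _ _) (by simpa using this)

lemma rows_interval {S : Finset (ℤ × ℤ)} (hconv : OrthoConvex S) :
    ∀ y x1 x2 x : ℤ, (x1, y) ∈ S → (x2, y) ∈ S → x1 ≤ x → x ≤ x2 → (x, y) ∈ S := by
  intro y x1 x2 x h1 h2 ha hb
  rcases eq_or_lt_of_le ha with rfl | ha'
  · exact h1
  rcases eq_or_lt_of_le hb with rfl | hb'
  · exact h2
  exact hconv.2 (x1, y) h1 (x2, y) h2 rfl x (by simp; omega) (by simp; omega)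

lemma cols_interval {S : Finset (ℤ × ℤ)} (hconv : OrthoConvex S) :
    ∀ x y1 y2 y : ℤ, (x, y1) ∈ S → (x, y2) ∈ S → y1 ≤ y → y ≤ y2 → (x, y) ∈ S := by
  intro x y1 y2 y h1 h2 ha hb
  rcases eq_or_lt_of_le ha with rfl | ha'
  · exact h1
  rcases eq_or_lt_of_le hb with rfl | hb'
  · exact h2
  exact hconv.1 (x, y1) h1 (x, y2) h2 rfl y (by simp; omega) (by simp; omega)
def Tval (S : Finset (ℤ × ℤ)) : ℤ := 3 * ((bcount S : ℤ) - (rcount S : ℤ)) - S.card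

theorem main_inv (n : ℕ) : ∀ (S : Finset (ℤ × ℤ)), S.card ≤ n →
    ShapeConnected S → OrthoConvex S →
    ∀ Y l r : ℤ, (∀ p ∈ S, p.2 ≤ Y) → (∀ x : ℤ, ((x, Y) ∈ S ↔ l ≤ x ∧ x ≤ r)) → l ≤ r →
    (Tval S ≤ 4 ∧
     (¬(l = r ∧ (l + Y) % 2 = 0) → Tval S ≤ 2) ∧
     ((l = r ∧ ¬(l + Y) % 2 = 0) → Tval S ≤ 0) ∧
     ((l = r ∧ (l + Y) % 2 = 0) ∧
       ((∀ x : ℤ, (x, Y - 1) ∉ S) ∨ (∃ x0, ∀ x : ℤ, ((x, Y - 1) ∈ S ↔ x = x0))) → Tval S ≤ 2)) := by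
  induction n with
  | zero =>
    intro S hcard _ _ Y l r _ hchar hlr
    exfalso
    have h1 : (l, Y) ∈ S := (hchar l).2 ⟨le_refl l, hlr⟩
    have := Finset.card_pos.2 ⟨_, h1⟩
    omega
  | succ n ih =>
    intro S hcard hconn hconv Y l r hY hchar hlr
    classical
    set R := S.filter (fun p => p.2 = Y) with hRdef
    set S' := S.filter (fun p => p.2 ≠ Y) with hS'def
    have hmemS' : ∀ p : ℤ × ℤ, p ∈ S' ↔ p ∈ S ∧ p.2 ≠ Y := by
      intro p; simp [hS'def, Finset.mem_filter]
    have hR : R = (Finset.Icc l r).image (fun x => ((x:ℤ), Y)) := by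
      ext p
      rcases p with ⟨a, b⟩
      simp only [hRdef, Finset.mem_filter, Finset.mem_image, Finset.mem_Icc, Prod.mk.injEq]
      constructor
      · rintro ⟨hS, rfl⟩
        exact ⟨a, (hchar a).1 hS, rfl, rfl⟩
      · rintro ⟨x, hx, rfl, rfl⟩
        exact ⟨(hchar x).2 hx, rfl⟩
    have hbrR : (bcount R : ℤ) - rcount R =
        (if (r - l) % 2 = 0 then (if (l + Y) % 2 = 0 then (1:ℤ) else -1) else 0) := by
      rw [hR, bcount_image_row, rcount_image_row]
      have h1 := row_diff (r - l).toNat l Y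
      rw [show (((r - l).toNat : ℤ)) = r - l by omega, show l + (r - l) = r by ring] at h1
      rw [h1]
    have hcardR : (R.card : ℤ) = r - l + 1 := by rw [hR]; exact card_image_row l r Y hlr
    have hsplit : Tval S = Tval S' +
        (3 * ((bcount R : ℤ) - rcount R) - R.card) := by
      unfold Tval
      rw [bcount_split S Y, rcount_split S Y, card_split S Y]
      push_cast
      ring
    rw [hbrR, hcardR] at hsplit
    by_cases hS'e : S' = ∅
    · have hTS' : Tval S' = 0 := by rw [hS'e]; simp [Tval, bcount, rcount]
      rw [hTS', zero_add] at hsplit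
      exact ⟨by rw [hsplit]; split_ifs <;> omega,
        fun h => by rw [hsplit]; split_ifs <;> omega,
        fun h => by rw [hsplit]; split_ifs <;> omega,
        fun h => by obtain ⟨⟨h1, h2⟩, _⟩ := h; rw [hsplit]; split_ifs <;> omega⟩
    · have hS'ne : S'.Nonempty := Finset.nonempty_iff_ne_empty.2 hS'e
      have hS'sub : ∀ p ∈ S', p ∈ S := fun p hp => ((hmemS' p).1 hp).1
      have hY' : ∀ p ∈ S', p.2 ≤ Y - 1 := by
        intro p hp
        have h1 := (hmemS' p).1 hp
        have := hY p h1.1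
        omega
      obtain ⟨p0, hp0⟩ := hS'ne
      have hp0S : p0 ∈ S := hS'sub p0 hp0
      have hlY : (l, Y) ∈ S := (hchar l).2 ⟨le_refl l, hlr⟩
      obtain ⟨xs, hxs1, hxs2⟩ : ∃ x : ℤ, (x, Y - 1) ∈ S ∧ (x, Y) ∈ S := by
        obtain ⟨x, h1, h2⟩ := crossing (hconn p0 hp0S (l, Y) hlY) (hY' p0 hp0)
          (by show Y - 1 < Y; omega)
        exact ⟨x, h1, by rwa [show Y - 1 + 1 = Y by ring] at h2⟩
      set row1 := (S.filter (fun p => p.2 = Y - 1)).image Prod.fst with hrow1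
      have hrow1ne : row1.Nonempty := by
        exact ⟨xs, Finset.mem_image.2 ⟨(xs, Y-1), Finset.mem_filter.2 ⟨hxs1, rfl⟩, rfl⟩⟩
      set l' := row1.min' hrow1ne with hl'def
      set r' := row1.max' hrow1ne with hr'def
      have hmemrow1 : ∀ x : ℤ, x ∈ row1 ↔ (x, Y - 1) ∈ S := by
        intro x
        simp only [hrow1, Finset.mem_image, Finset.mem_filter]
        constructor
        · rintro ⟨⟨a, b⟩, ⟨hS, hb⟩, h⟩
          simp only at hb h
          subst hb; subst h
          exact hS
        · intro h; exact ⟨(x, Y-1), ⟨h, rfl⟩, rfl⟩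
      have hchar' : ∀ x : ℤ, (x, Y - 1) ∈ S ↔ l' ≤ x ∧ x ≤ r' := by
        intro x
        constructor
        · intro h
          have hx : x ∈ row1 := (hmemrow1 x).2 h
          exact ⟨Finset.min'_le _ _ hx, Finset.le_max' _ _ hx⟩
        · rintro ⟨h1, h2⟩
          have hl'm : (l', Y - 1) ∈ S := (hmemrow1 l').1 (Finset.min'_mem _ _)
          have hr'm : (r', Y - 1) ∈ S := (hmemrow1 r').1 (Finset.max'_mem _ _)
          exact rows_interval hconv _ _ _ _ hl'm hr'm h1 h2
      have hlr' : l' ≤ r' := Finset.min'_le _ _ (Finset.max'_mem _ _)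
      have hconn' : ShapeConnected S' := by
        apply structure_connected
        · intro y x1 x2 x h1 h2 ha hb
          have h1' := (hmemS' _).1 h1
          have h2' := (hmemS' _).1 h2
          exact (hmemS' _).2 ⟨rows_interval hconv y x1 x2 x h1'.1 h2'.1 ha hb, h1'.2⟩
        · rintro y ⟨a, ha⟩ ⟨b, hb⟩
          have ha' := (hmemS' _).1 ha
          have hb' := (hmemS' _).1 hb
          obtain ⟨x, h1, h2⟩ := crossing (hconn _ ha'.1 _ hb'.1)
            (le_refl _ : ((a, y) : ℤ × ℤ).2 ≤ y) (by show y < y + 1; omega)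
          have hy1 : y + 1 ≤ Y - 1 := by
            have h3 := hY _ hb'.1
            have h4 := hb'.2
            simp only at h3 h4
            omega
          exact ⟨x, (hmemS' _).2 ⟨h1, by show y ≠ Y; omega⟩,
            (hmemS' _).2 ⟨h2, by show y + 1 ≠ Y; omega⟩⟩
        · intro p hp q hq y h1 h2
          rcases eq_or_lt_of_le h2 with rfl | h2'
          · exact ⟨q.1, by simpa using hq⟩
          · obtain ⟨x, hx1, _⟩ := crossing (hconn _ ((hmemS' p).1 hp).1 _ ((hmemS' q).1 hq).1) h1 h2'
            have hyY : y ≠ Y := by have := hY' q hq; omega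
            exact ⟨x, (hmemS' _).2 ⟨hx1, hyY⟩⟩
      have hconv' : OrthoConvex S' := by
        constructor
        · intro p hp q hq hxy y hy1 hy2
          have hp' := (hmemS' p).1 hp
          have hq' := (hmemS' q).1 hq
          refine (hmemS' _).2 ⟨hconv.1 p hp'.1 q hq'.1 hxy y hy1 hy2, ?_⟩
          have h3 := hY' p hp
          have h4 := hY' q hq
          show y ≠ Y
          omega
        · intro p hp q hq hxy x hx1 hx2
          have hp' := (hmemS' p).1 hp
          have hq' := (hmemS' q).1 hq
          exact (hmemS' _).2 ⟨hconv.2 p hp'.1 q hq'.1 hxy x hx1 hx2, hp'.2⟩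
      have hcards : S.card = R.card + S'.card := card_split S Y
      have hcard' : S'.card ≤ n := by
        have hRpos : 0 < R.card := Finset.card_pos.2 ⟨(l, Y), Finset.mem_filter.2 ⟨hlY, rfl⟩⟩
        omega
      have hchar'' : ∀ x : ℤ, ((x, Y - 1) ∈ S' ↔ l' ≤ x ∧ x ≤ r') := by
        intro x
        rw [hmemS']
        constructor
        · exact fun h => (hchar' x).1 h.1
        · intro h
          exact ⟨(hchar' x).2 h, by show Y - 1 ≠ Y; omega⟩
      have IH := ih S' hcard' hconn' hconv' (Y - 1) l' r' hY' hchar'' hlr'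
      have hxsb := (hchar xs).1 hxs2
      have hxsb' := (hchar' xs).1 hxs1
      by_cases hsingle : l = r
      · by_cases hblack : (l + Y) % 2 = 0
        · -- Case A : top row single black
          have hg : Tval S = Tval S' + 2 := by
            rw [hsplit, if_pos (by omega : (r - l) % 2 = 0), if_pos hblack]; omega
          have hxseq : xs = l := by omega
          have hlY1 : (l, Y - 1) ∈ S := by rw [← hxseq]; exact hxs1
          by_cases hsingle' : l' = r'
          · have hl'eq : l' = l := by
              have := (hchar' l).1 hlY1; omega
            have hT' := IH.2.2.1 ⟨hsingle', by omega⟩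
            exact ⟨by omega, fun h => by omega, fun h => by omega, fun _ => by omega⟩
          · have hT' := IH.2.1 (fun hc => hsingle' hc.1)
            have hd : ¬((∀ x : ℤ, (x, Y - 1) ∉ S) ∨
                (∃ x0, ∀ x : ℤ, ((x, Y - 1) ∈ S ↔ x = x0))) := by
              rintro (h | ⟨x0, h⟩)
              · exact h l hlY1
              · have h1 : (l', Y-1) ∈ S := (hchar' l').2 ⟨le_refl _, hlr'⟩
                have h2 : (r', Y-1) ∈ S := (hchar' r').2 ⟨hlr', le_refl _⟩
                have e1 := (h l').1 h1
                have e2 := (h r').1 h2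
                omega
            exact ⟨by omega, fun h => by omega, fun h => by omega, fun h => absurd h.2 hd⟩
        · -- Case B : top row single red
          have hg : Tval S = Tval S' + (-4) := by
            rw [hsplit, if_pos (by omega : (r - l) % 2 = 0), if_neg hblack]; omega
          have hT' := IH.1
          exact ⟨by omega, fun _ => by omega, fun _ => by omega, fun h => by
            have := h.1; omega⟩
      · by_cases heven : (r - l) % 2 = 0
        · by_cases hblack : (l + Y) % 2 = 0
          · -- Case E : top row odd length ≥ 3, black start
            have hg : Tval S = Tval S' + (2 - (r - l)) := by
              rw [hsplit, if_pos heven, if_pos hblack]; ring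
            by_cases hsb' : l' = r' ∧ (l' + (Y - 1)) % 2 = 0
            · by_cases hfresh : ((∀ x : ℤ, (x, Y - 1 - 1) ∉ S') ∨
                  (∃ x0, ∀ x : ℤ, ((x, Y - 1 - 1) ∈ S' ↔ x = x0)))
              · have hT' := IH.2.2.2 ⟨hsb', hfresh⟩
                exact ⟨by omega, fun _ => by omega, fun h => by omega, fun _ => by omega⟩
              · -- contradiction with column convexity
                exfalso
                push_neg at hfresh
                obtain ⟨hne2, hnosingle⟩ := hfresh
                obtain ⟨x2, hx2⟩ := hne2
                have hx2S : (x2, Y - 2) ∈ S := by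
                  have := (hmemS' _).1 (by rwa [show Y - 1 - 1 = Y - 2 by ring] at hx2)
                  exact this.1
                -- xs = l' and l < l' < r
                have hxseq : xs = l' := by omega
                have hl'top : (l', Y) ∈ S := by rw [← hxseq]; exact hxs2
                have hl'bds := (hchar l').1 hl'top
                have hl'row : (l', Y - 1) ∈ S := by rw [← hxseq]; exact hxs1
                have hpar : (l' + (Y - 1)) % 2 = 0 := hsb'.2
                have hstrict : l < l' ∧ l' < r := by omega
                have hLm : (l' - 1, Y) ∈ S := (hchar _).2 ⟨by omega, by omega⟩
                have hLp : (l' + 1, Y) ∈ S := (hchar _).2 ⟨by omega, by omega⟩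
                have hl'Y2 : (l', Y - 2) ∈ S := by
                  obtain ⟨x3, h1, h2⟩ := crossing (hconn _ hx2S _ hl'row)
                    (le_refl _ : ((x2, Y - 2) : ℤ × ℤ).2 ≤ Y - 2) (by show Y - 2 < Y - 1; omega)
                  have h2' : (x3, Y - 1) ∈ S := by rwa [show Y - 2 + 1 = Y - 1 by ring] at h2
                  have := (hchar' x3).1 h2'
                  have hx3 : x3 = l' := by omega
                  rwa [hx3] at h1
                have hl'Y2' : (l', Y - 2) ∈ S' := (hmemS' _).2 ⟨hl'Y2, by show Y - 2 ≠ Y; omega⟩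
                obtain ⟨x4, hx4⟩ := hnosingle l'
                rw [show Y - 1 - 1 = Y - 2 by ring] at hx4
                have hx4' : (x4, Y - 2) ∈ S ∧ x4 ≠ l' := by
                  rcases hx4 with ⟨hm, hne⟩ | ⟨hnm, heq⟩
                  · exact ⟨((hmemS' _).1 hm).1, hne⟩
                  · exact (hnm (by rw [heq]; exact hl'Y2')).elim
                rcases lt_or_gt_of_ne hx4'.2 with hlt | hgt
                · have h5 : (l' - 1, Y - 2) ∈ S :=
                    rows_interval hconv (Y-2) x4 l' (l'-1) hx4'.1 hl'Y2 (by omega) (by omega)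
                  have h6 : (l' - 1, Y - 1) ∈ S :=
                    cols_interval hconv (l'-1) (Y-2) Y (Y-1) h5 hLm (by omega) (by omega)
                  have := (hchar' _).1 h6
                  omega
                · have h5 : (l' + 1, Y - 2) ∈ S :=
                    rows_interval hconv (Y-2) l' x4 (l'+1) hl'Y2 hx4'.1 (by omega) (by omega)
                  have h6 : (l' + 1, Y - 1) ∈ S :=
                    cols_interval hconv (l'+1) (Y-2) Y (Y-1) h5 hLp (by omega) (by omega)
                  have := (hchar' _).1 h6
                  omega
            · by_cases hsr' : l' = r'
              · have hT' := IH.2.2.1 ⟨hsr', fun h => hsb' ⟨hsr', h⟩⟩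
                exact ⟨by omega, fun _ => by omega, fun h => by omega, fun _ => by omega⟩
              · have hT' := IH.2.1 (fun hc => hsr' hc.1)
                exact ⟨by omega, fun _ => by omega, fun h => by omega, fun _ => by omega⟩
          · -- Case D : odd length, red start
            have hg : Tval S = Tval S' + (-3 - (r - l + 1)) := by
              rw [hsplit, if_pos heven, if_neg hblack]; ring
            have hT' := IH.1
            exact ⟨by omega, fun _ => by omega, fun h => by omega, fun _ => by omega⟩
        · -- Case C : even length
          have hg : Tval S = Tval S' + (0 - (r - l + 1)) := by
            rw [hsplit, if_neg heven]; ring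
          have hT' := IH.1
          exact ⟨by omega, fun _ => by omega, fun h => by omega, fun _ => by omega⟩
lemma bcount_add_rcount (S : Finset (ℤ × ℤ)) : bcount S + rcount S = S.card := by
  classical
  exact Finset.card_filter_add_card_filter_not _

/-- Upper bound in one direction. -/
theorem upper_one (S : Finset (ℤ × ℤ)) (hne : S.Nonempty)
    (hconn : ShapeConnected S) (hconv : OrthoConvex S) :
    3 * ((bcount S : ℤ) - (rcount S : ℤ)) ≤ S.card + 4 := by
  classical
  have hne2 : (S.image Prod.snd).Nonempty := hne.image _
  set Y := (S.image Prod.snd).max' hne2 with hYdef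
  have hY : ∀ p ∈ S, p.2 ≤ Y := fun p hp =>
    Finset.le_max' _ _ (Finset.mem_image.2 ⟨p, hp, rfl⟩)
  have hYmem : ∃ x : ℤ, (x, Y) ∈ S := by
    have := Finset.max'_mem (S.image Prod.snd) hne2
    rw [Finset.mem_image] at this
    obtain ⟨p, hp, hp2⟩ := this
    exact ⟨p.1, by rw [hYdef, ← hp2, Prod.mk.eta]; exact hp⟩
  obtain ⟨x0, hx0⟩ := hYmem
  set row0 := (S.filter (fun p => p.2 = Y)).image Prod.fst with hrow0
  have hrow0ne : row0.Nonempty :=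
    ⟨x0, Finset.mem_image.2 ⟨(x0, Y), Finset.mem_filter.2 ⟨hx0, rfl⟩, rfl⟩⟩
  set l := row0.min' hrow0ne with hldef
  set r := row0.max' hrow0ne with hrdef
  have hmemrow0 : ∀ x : ℤ, x ∈ row0 ↔ (x, Y) ∈ S := by
    intro x
    simp only [hrow0, Finset.mem_image, Finset.mem_filter]
    constructor
    · rintro ⟨⟨a, b⟩, ⟨hS, hb⟩, h⟩
      simp only at hb h
      subst hb; subst h
      exact hS
    · intro h; exact ⟨(x, Y), ⟨h, rfl⟩, rfl⟩
  have hchar : ∀ x : ℤ, (x, Y) ∈ S ↔ l ≤ x ∧ x ≤ r := by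
    intro x
    constructor
    · intro h
      have hx : x ∈ row0 := (hmemrow0 x).2 h
      exact ⟨Finset.min'_le _ _ hx, Finset.le_max' _ _ hx⟩
    · rintro ⟨h1, h2⟩
      have hl'm : (l, Y) ∈ S := (hmemrow0 l).1 (Finset.min'_mem _ _)
      have hr'm : (r, Y) ∈ S := (hmemrow0 r).1 (Finset.max'_mem _ _)
      exact rows_interval hconv _ _ _ _ hl'm hr'm h1 h2
  have hlr : l ≤ r := Finset.min'_le _ _ (Finset.max'_mem _ _)
  have := (main_inv S.card S le_rfl hconn hconv Y l r hY hchar hlr).1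
  unfold Tval at this
  omega

lemma shift_mem (S : Finset (ℤ × ℤ)) (a b : ℤ) :
    (a, b) ∈ S.image (fun p : ℤ × ℤ => (p.1 + 1, p.2)) ↔ (a - 1, b) ∈ S := by
  simp only [Finset.mem_image, Prod.mk.injEq]
  constructor
  · rintro ⟨⟨u, v⟩, hm, h1, h2⟩
    simp only at h1 h2
    subst h2
    have : u = a - 1 := by omega
    subst this
    exact hm
  · intro h
    exact ⟨(a - 1, b), h, by ring, rfl⟩

lemma adjacent_shift {a b : ℤ × ℤ} (h : Adjacent a b) :
    Adjacent (a.1 + 1, a.2) (b.1 + 1, b.2) := by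
  unfold Adjacent at *
  simp only at *
  omega

/-- Upper bound, both directions. -/
theorem upper_abs (S : Finset (ℤ × ℤ)) (hne : S.Nonempty)
    (hconn : ShapeConnected S) (hconv : OrthoConvex S) :
    3 * |(bcount S : ℤ) - (rcount S : ℤ)| ≤ S.card + 4 := by
  classical
  set f : ℤ × ℤ → ℤ × ℤ := fun p => (p.1 + 1, p.2) with hfdef
  set S2 := S.image f with hS2def
  have hmem2 : ∀ a b : ℤ, ((a, b) ∈ S2 ↔ (a - 1, b) ∈ S) := fun a b => shift_mem S a b
  have hinj : Function.Injective f := by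
    rintro ⟨u, v⟩ ⟨w, z⟩ h
    simp only [hfdef, Prod.mk.injEq] at h
    obtain ⟨h1, h2⟩ := h
    simp [h2]; omega
  have hcard2 : S2.card = S.card := Finset.card_image_of_injective _ hinj
  have hb2 : bcount S2 = rcount S := by
    unfold bcount rcount
    rw [hS2def, Finset.filter_image]
    rw [Finset.card_image_of_injective _ hinj]
    congr 1
    apply Finset.filter_congr
    intro ⟨u, v⟩ _
    simp only [hfdef]
    constructor
    · intro h h2; omega
    · intro h; omega
  have hr2 : rcount S2 = bcount S := by
    have h1 := bcount_add_rcount S2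
    have h2 := bcount_add_rcount S
    omega
  have hne2 : S2.Nonempty := hne.image f
  have hconn2 : ShapeConnected S2 := by
    intro p hp q hq
    rw [hS2def, Finset.mem_image] at hp hq
    obtain ⟨p', hp', rfl⟩ := hp
    obtain ⟨q', hq', rfl⟩ := hq
    refine Relation.ReflTransGen.lift f ?_ _ _ (hconn p' hp' q' hq')
    rintro a b ⟨h1, h2, h3⟩
    exact ⟨Finset.mem_image_of_mem f h1, Finset.mem_image_of_mem f h2,
      by simpa [hfdef] using adjacent_shift h3⟩
  have hconv2 : OrthoConvex S2 := by
    constructor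
    · rintro ⟨a, b⟩ hp ⟨c, d⟩ hq hx y h1 h2
      simp only at hx h1 h2
      rw [hmem2] at hp hq ⊢
      exact cols_interval hconv (a-1) (min b d) (max b d) y
        (by rcases min_choice b d with h | h <;> rw [h] <;> [exact hp; exact (hx ▸ hq)])
        (by rcases max_choice b d with h | h <;> rw [h] <;> [exact hp; exact (hx ▸ hq)])
        (le_of_lt h1) (le_of_lt h2)
    · rintro ⟨a, b⟩ hp ⟨c, d⟩ hq hy x h1 h2
      simp only at hy h1 h2
      rw [hmem2] at hp hq ⊢
      subst hy
      exact rows_interval hconv b (min a c - 1) (max a c - 1) (x - 1)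
        (by rcases min_choice a c with h | h <;> rw [h] <;> [exact hp; exact hq])
        (by rcases max_choice a c with h | h <;> rw [h] <;> [exact hp; exact hq])
        (by omega) (by omega)
  have h1 := upper_one S hne hconn hconv
  have h2 := upper_one S2 hne2 hconn2 hconv2
  rw [hb2, hr2, hcard2] at h2
  rcases abs_cases ((bcount S : ℤ) - (rcount S : ℤ)) with ⟨h, _⟩ | ⟨h, _⟩ <;> rw [h] <;> omega
section Construction

variable (K a1 a2 : ℤ)

noncomputable def chainShape : Finset (ℤ × ℤ) :=
  ((Finset.Icc (0:ℤ) (K-1)).image fun i => (i, i)) ∪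
  ((Finset.Icc a1 (K-1)).image fun i => (i, i+1)) ∪
  ((Finset.Icc a2 (K-1)).image fun i => (i+1, i))

lemma chain_mem (a b : ℤ) :
    (a, b) ∈ chainShape K a1 a2 ↔
      (0 ≤ a ∧ a ≤ K-1 ∧ b = a) ∨ (a1 ≤ a ∧ a ≤ K-1 ∧ b = a+1) ∨
      (a2 ≤ b ∧ b ≤ K-1 ∧ a = b+1) := by
  unfold chainShape
  simp only [Finset.mem_union, Finset.mem_image, Finset.mem_Icc, Prod.mk.injEq]
  constructor
  · rintro ((⟨x, hx, rfl, rfl⟩ | ⟨x, hx, rfl, rfl⟩) | ⟨x, hx, rfl, rfl⟩)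
    · exact Or.inl ⟨hx.1, hx.2, rfl⟩
    · exact Or.inr (Or.inl ⟨hx.1, hx.2, rfl⟩)
    · exact Or.inr (Or.inr ⟨hx.1, hx.2, rfl⟩)
  · rintro (⟨h1, h2, h3⟩ | ⟨h1, h2, h3⟩ | ⟨h1, h2, h3⟩)
    · exact Or.inl (Or.inl ⟨a, ⟨h1, h2⟩, rfl, h3.symm⟩)
    · exact Or.inl (Or.inr ⟨a, ⟨h1, h2⟩, rfl, h3.symm⟩)
    · exact Or.inr ⟨b, ⟨h1, h2⟩, h3.symm, rfl⟩

end Construction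

/-- For n ≥ 3, the maximum absolute colour-difference over connected orthogonal
convex shapes of n cells is exactly n - 2⌊n/3⌋. -/
theorem stmt6 (n : ℕ) (hn : 3 ≤ n) :
    IsGreatest {d : ℤ | ∃ S : Finset (ℤ × ℤ), ShapeConnected S ∧ OrthoConvex S ∧
        S.card = n ∧ d = |(bcount S : ℤ) - (rcount S : ℤ)|}
      ((n : ℤ) - 2 * ((n / 3 : ℕ) : ℤ)) := by
  classical
  constructor
  · -- membership : construction
    set k : ℕ := n / 3 with hkdef
    set K : ℤ := (k : ℤ) with hKdef
    have hK1 : 1 ≤ K := by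
      have : 1 ≤ k := by omega
      omega
    set a1 : ℤ := if n % 3 = 2 then -1 else 0 with ha1def
    set a2 : ℤ := if n % 3 = 0 then 0 else -1 with ha2def
    have ha1 : a1 = -1 ∨ a1 = 0 := by rw [ha1def]; split_ifs <;> simp
    have ha2 : a2 = -1 ∨ a2 = 0 := by rw [ha2def]; split_ifs <;> simp
    set S := chainShape K a1 a2 with hSdef
    have hmem : ∀ a b : ℤ, ((a, b) ∈ S ↔
        (0 ≤ a ∧ a ≤ K-1 ∧ b = a) ∨ (a1 ≤ a ∧ a ≤ K-1 ∧ b = a+1) ∨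
        (a2 ≤ b ∧ b ≤ K-1 ∧ a = b+1)) := fun a b => chain_mem K a1 a2 a b
    -- connectivity
    have hrel : ∀ p q : ℤ × ℤ, p ∈ S → q ∈ S → Adjacent p q →
        Relation.ReflTransGen (fun a b => a ∈ S ∧ b ∈ S ∧ Adjacent a b) p q :=
      fun p q h1 h2 h3 => Relation.ReflTransGen.single ⟨h1, h2, h3⟩
    have hC00 : ((0:ℤ), (0:ℤ)) ∈ S := (hmem 0 0).2 (Or.inl ⟨le_refl _, by omega, rfl⟩)
    have hcenter : ∀ i : ℤ, 0 ≤ i → i ≤ K - 1 →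
        Relation.ReflTransGen (fun a b => a ∈ S ∧ b ∈ S ∧ Adjacent a b) (i, i) (0, 0) := by
      intro i hi
      refine Int.le_induction (motive := fun i _ => i ≤ K - 1 →
        Relation.ReflTransGen (fun a b => a ∈ S ∧ b ∈ S ∧ Adjacent a b) (i, i) (0, 0))
        ?_ ?_ i hi
      · intro _; exact Relation.ReflTransGen.refl
      · intro i hi0 ihh hiK
        have m1 : ((i+1:ℤ), (i+1:ℤ)) ∈ S := (hmem _ _).2 (Or.inl ⟨by omega, by omega, rfl⟩)
        have m2 : ((i:ℤ), (i+1:ℤ)) ∈ S := (hmem _ _).2 (Or.inr (Or.inl ⟨by omega, by omega, rfl⟩))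
        have m3 : ((i:ℤ), (i:ℤ)) ∈ S := (hmem _ _).2 (Or.inl ⟨by omega, by omega, rfl⟩)
        refine Relation.ReflTransGen.head ⟨m1, m2, ?_⟩ (Relation.ReflTransGen.head ⟨m2, m3, ?_⟩ (ihh (by omega)))
        · exact Or.inr ⟨rfl, Or.inl rfl⟩
        · exact Or.inl ⟨rfl, Or.inl rfl⟩
    have hall : ∀ p ∈ S, Relation.ReflTransGen (fun a b => a ∈ S ∧ b ∈ S ∧ Adjacent a b) p (0, 0) := by
      rintro ⟨a, b⟩ hp
      rcases (hmem a b).1 hp with ⟨h1, h2, h3⟩ | ⟨h1, h2, h3⟩ | ⟨h1, h2, h3⟩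
      · subst h3; exact hcenter _ h1 h2
      · subst h3
        by_cases h0 : 0 ≤ a
        · have m3 : ((a:ℤ), (a:ℤ)) ∈ S := (hmem _ _).2 (Or.inl ⟨by omega, by omega, rfl⟩)
          exact Relation.ReflTransGen.head ⟨hp, m3, Or.inl ⟨rfl, Or.inl rfl⟩⟩ (hcenter a h0 h2)
        · have ha : a = -1 := by omega
          subst ha
          exact Relation.ReflTransGen.head ⟨hp, hC00, Or.inr ⟨by norm_num, Or.inr (by norm_num)⟩⟩
            Relation.ReflTransGen.refl
      · subst h3
        by_cases h0 : 0 ≤ b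
        · have m3 : ((b:ℤ), (b:ℤ)) ∈ S := (hmem _ _).2 (Or.inl ⟨by omega, by omega, rfl⟩)
          exact Relation.ReflTransGen.head ⟨hp, m3, Or.inr ⟨rfl, Or.inl rfl⟩⟩ (hcenter b h0 h2)
        · have hb : b = -1 := by omega
          subst hb
          exact Relation.ReflTransGen.head ⟨hp, hC00, Or.inl ⟨by norm_num, Or.inr (by norm_num)⟩⟩
            Relation.ReflTransGen.refl
    have hconn : ShapeConnected S := by
      intro p hp q hq
      exact (hall p hp).trans ((@Std.Symm.symm _ _ (@Relation.ReflTransGen.stdSymm _ _ ⟨fun a b h => rel_symm S h⟩) _ _) (hall q hq))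
    -- convexity
    have hconv : OrthoConvex S := by
      constructor
      · rintro ⟨a, b⟩ hp ⟨c, d⟩ hq hx y h1 h2
        simp only at hx h1 h2
        subst hx
        rw [hmem] at hp hq ⊢
        omega
      · rintro ⟨a, b⟩ hp ⟨c, d⟩ hq hy x h1 h2
        simp only at hy h1 h2
        subst hy
        rw [hmem] at hp hq ⊢
        omega
    -- cardinality
    have hdisj1 : Disjoint ((Finset.Icc (0:ℤ) (K-1)).image fun i => ((i:ℤ), (i:ℤ)))
        ((Finset.Icc a1 (K-1)).image fun i => ((i:ℤ), (i:ℤ)+1)) := by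
      rw [Finset.disjoint_left]
      rintro ⟨a, b⟩ h1 h2
      simp only [Finset.mem_image, Finset.mem_Icc, Prod.mk.injEq] at h1 h2
      obtain ⟨x, _, rfl, rfl⟩ := h1
      obtain ⟨y, _, rfl, h⟩ := h2
      omega
    have hdisj2 : Disjoint (((Finset.Icc (0:ℤ) (K-1)).image fun i => ((i:ℤ), (i:ℤ))) ∪
        ((Finset.Icc a1 (K-1)).image fun i => ((i:ℤ), (i:ℤ)+1)))
        ((Finset.Icc a2 (K-1)).image fun i => ((i:ℤ)+1, (i:ℤ))) := by
      rw [Finset.disjoint_left]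
      rintro ⟨a, b⟩ h1 h2
      simp only [Finset.mem_union, Finset.mem_image, Finset.mem_Icc, Prod.mk.injEq] at h1 h2
      obtain ⟨y, hy, rfl, rfl⟩ := h2
      rcases h1 with ⟨x, hx, rfl, h⟩ | ⟨x, hx, h, h'⟩ <;> omega
    have hinj1 : Function.Injective (fun i : ℤ => ((i:ℤ), (i:ℤ))) := by
      intro a b h; simpa using congrArg Prod.fst h
    have hinj2 : Function.Injective (fun i : ℤ => ((i:ℤ), (i:ℤ)+1)) := by
      intro a b h; simpa using congrArg Prod.fst h
    have hinj3 : Function.Injective (fun i : ℤ => ((i:ℤ)+1, (i:ℤ))) := by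
      intro a b h; simpa using congrArg Prod.snd h
    have hcard : S.card = n := by
      rw [hSdef]
      unfold chainShape
      rw [Finset.card_union_of_disjoint hdisj2, Finset.card_union_of_disjoint hdisj1]
      rw [Finset.card_image_of_injective _ hinj1, Finset.card_image_of_injective _ hinj2,
        Finset.card_image_of_injective _ hinj3]
      rw [Int.card_Icc, Int.card_Icc, Int.card_Icc]
      rcases ha1 with h1 | h1 <;> rcases ha2 with h2 | h2 <;> rw [h1, h2] <;>
        simp only [ha1def, ha2def] at h1 h2 <;> omega
    -- counts
    have hbc : bcount S = k := by
      have hfe : S.filter (fun p => (p.1 + p.2) % 2 = 0) =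
          (Finset.Icc (0:ℤ) (K-1)).image fun i => ((i:ℤ), (i:ℤ)) := by
        ext ⟨a, b⟩
        simp only [Finset.mem_filter, Finset.mem_image, Finset.mem_Icc, Prod.mk.injEq]
        constructor
        · rintro ⟨hm, hpar⟩
          have hpar' : (a + b) % 2 = 0 := hpar
          rcases (hmem a b).1 hm with ⟨h1, h2, h3⟩ | ⟨h1, h2, h3⟩ | ⟨h1, h2, h3⟩
          · exact ⟨a, ⟨h1, by omega⟩, rfl, h3.symm⟩
          · omega
          · omega
        · rintro ⟨x, hx, rfl, rfl⟩
          exact ⟨(hmem x x).2 (Or.inl ⟨hx.1, hx.2, rfl⟩), by show (x + x) % 2 = 0; omega⟩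
      unfold bcount
      rw [hfe, Finset.card_image_of_injective _ hinj1, Int.card_Icc]
      omega
    have hrc : rcount S = n - k := by
      have := bcount_add_rcount S
      omega
    refine ⟨S, hconn, hconv, hcard, ?_⟩
    rw [hbc, hrc]
    have h2k : 2 * k ≤ n := by omega
    rcases abs_cases ((k : ℤ) - ((n - k : ℕ) : ℤ)) with ⟨h, _⟩ | ⟨h, _⟩ <;> rw [h] <;> push_cast <;> omega
  · -- upper bound
    rintro d ⟨S, hconn, hconv, hcard, rfl⟩
    have hne : S.Nonempty := by
      rw [← Finset.card_pos, hcard]; omega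
    have := upper_abs S hne hconn hconv
    rw [hcard] at this
    have hsum := bcount_add_rcount S
    rw [hcard] at hsum
    rcases abs_cases ((bcount S : ℤ) - (rcount S : ℤ)) with ⟨h, _⟩ | ⟨h, _⟩ <;> rw [h] at this ⊢ <;> omega
end

section
/- Every finite connected orthogonal convex shape S admits a row elimination sequence: an ordering u_1,…,u_n of its cells, processed row by row from the bottom-most row upward, such that for every t the remaining shape S \ {u_1,…,u_t} is connected and orthogonal convex, and each removed cell u_t is removed from an endpoint of the current bottom-most row (each row being eliminated as one or two monotone runs from its endpoints). -/
def Step (T : Finset (ℤ × ℤ)) (a b : ℤ × ℤ) : Prop := a ∈ T ∧ b ∈ T ∧ Adjacent a b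

lemma step_symm (T : Finset (ℤ × ℤ)) : Symmetric (Step T) :=
  fun _ _ ⟨h1, h2, h3⟩ => ⟨h2, h1, adjacent_symm h3⟩

lemma segPath (T : Finset (ℤ × ℤ)) (f : ℤ → ℤ × ℤ)
    (hadj : ∀ x : ℤ, Adjacent (f x) (f (x + 1))) :
    ∀ n : ℕ, ∀ x1 x2 : ℤ, x1 ≤ x2 → (x2 - x1).toNat = n →
      (∀ x, x1 ≤ x → x ≤ x2 → f x ∈ T) →
      Relation.ReflTransGen (Step T) (f x1) (f x2) := by
  intro n
  induction n with
  | zero =>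
    intro x1 x2 hle hn _
    have : x1 = x2 := by omega
    subst this; exact Relation.ReflTransGen.refl
  | succ n ih =>
    intro x1 x2 hle hn hmem
    have h1 : x1 < x2 := by omega
    refine Relation.ReflTransGen.head ⟨hmem x1 le_rfl hle, hmem (x1+1) (by omega) (by omega), hadj x1⟩ ?_
    exact ih (x1+1) x2 (by omega) (by omega) (fun x hx1 hx2 => hmem x (by omega) hx2)

lemma rowPath (T : Finset (ℤ × ℤ))
    (hrow : ∀ p ∈ T, ∀ q ∈ T, p.2 = q.2 → ∀ x : ℤ,
      min p.1 q.1 < x → x < max p.1 q.1 → (x, p.2) ∈ T)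
    (x1 x2 y : ℤ) (h1 : (x1, y) ∈ T) (h2 : (x2, y) ∈ T) :
    Relation.ReflTransGen (Step T) (x1, y) (x2, y) := by
  have hmem : ∀ x, min x1 x2 ≤ x → x ≤ max x1 x2 → ((x : ℤ), y) ∈ T := by
    intro x ha hb
    rcases eq_or_lt_of_le ha with h | h
    · rcases min_cases x1 x2 with ⟨he, _⟩ | ⟨he, _⟩ <;> rw [he] at h <;> simp [← h, h1, h2]
    rcases eq_or_lt_of_le hb with h' | h'
    · rcases max_cases x1 x2 with ⟨he, _⟩ | ⟨he, _⟩ <;> rw [he] at h' <;> simp [h', h1, h2]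
    · exact hrow (x1, y) h1 (x2, y) h2 rfl x h h'
  have hadj : ∀ x : ℤ, Adjacent ((x : ℤ), y) (x + 1, y) := by
    intro x; right; exact ⟨rfl, Or.inr rfl⟩
  rcases le_total x1 x2 with hle | hle
  · exact segPath T (fun x => (x, y)) hadj _ x1 x2 hle rfl
      (fun x ha hb => hmem x (by omega) (by omega))
  · exact ((@Relation.ReflTransGen.stdSymm _ _ ⟨fun a b h => step_symm T h⟩).symm _ _)
      (segPath T (fun x => (x, y)) hadj _ x2 x1 hle rfl
        (fun x ha hb => hmem x (by omega) (by omega)))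

lemma cross {S : Finset (ℤ × ℤ)} {p q : ℤ × ℤ}
    (h : Relation.ReflTransGen (Step S) p q) :
    ∀ c : ℤ, q.2 ≤ c → c < p.2 → ∃ x : ℤ, (x, c + 1) ∈ S ∧ (x, c) ∈ S := by
  induction h using Relation.ReflTransGen.head_induction_on with
  | refl => intro c h1 h2; omega
  | @head a b hab hbq ih =>
    intro c h1 h2
    rcases lt_or_ge c b.2 with h3 | h3
    · exact ih c h1 h3
    · obtain ⟨ha, hb, hadj⟩ := hab
      rcases hadj with ⟨hx, hy⟩ | ⟨hy, _⟩
      · refine ⟨a.1, ?_, ?_⟩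
        · simpa [show (c : ℤ) + 1 = a.2 by omega] using ha
        · simpa [hx, show (c : ℤ) = b.2 by omega] using hb
      · omega

lemma conn (T : Finset (ℤ × ℤ)) (ho : OrthoConvex T)
    (H : ∀ p ∈ T, (∃ q ∈ T, q.2 < p.2) → ∃ x : ℤ, (x, p.2) ∈ T ∧ (x, p.2 - 1) ∈ T) :
    ShapeConnected T := by
  intro p hp q hq
  have hne : (T.image Prod.snd).Nonempty := ⟨p.2, Finset.mem_image_of_mem _ hp⟩
  set m := (T.image Prod.snd).min' hne with hm
  have hmle : ∀ r ∈ T, m ≤ r.2 := fun r hr =>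
    Finset.min'_le _ _ (Finset.mem_image_of_mem _ hr)
  have descend : ∀ n : ℕ, ∀ r ∈ T, r.2 ≤ m + n →
      ∃ z ∈ T, (∀ w ∈ T, z.2 ≤ w.2) ∧ Relation.ReflTransGen (Step T) r z := by
    intro n
    induction n with
    | zero =>
      intro r hr hle
      exact ⟨r, hr, fun w hw => le_trans (by omega) (hmle w hw), Relation.ReflTransGen.refl⟩
    | succ n ih =>
      intro r hr hle
      by_cases hlow : ∃ w ∈ T, w.2 < r.2
      · obtain ⟨x, hx1, hx2⟩ := H r hr hlow
        have hpath1 : Relation.ReflTransGen (Step T) r (x, r.2) := by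
          have := rowPath T ho.2 r.1 x r.2 (by simpa using hr) hx1
          simpa using this
        have hstep : Step T (x, r.2) (x, r.2 - 1) := by
          exact ⟨hx1, hx2, Or.inl ⟨rfl, Or.inl (by omega)⟩⟩
        obtain ⟨z, hz1, hz2, hz3⟩ := ih (x, r.2 - 1) hx2 (by
          have := hmle (x, r.2 - 1) hx2; simp at this ⊢; omega)
        exact ⟨z, hz1, hz2, (hpath1.tail hstep).trans hz3⟩
      · push_neg at hlow
        exact ⟨r, hr, fun w hw => le_of_not_gt (by exact fun h => absurd h (not_lt.mpr (hlow w hw))), Relation.ReflTransGen.refl⟩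
  obtain ⟨zp, hzp, hzpmin, hzppath⟩ := descend (p.2 - m).toNat p hp (by have := hmle p hp; omega)
  obtain ⟨zq, hzq, hzqmin, hzqpath⟩ := descend (q.2 - m).toNat q hq (by have := hmle q hq; omega)
  have hyeq : zp.2 = zq.2 := le_antisymm (hzpmin zq hzq) (hzqmin zp hzp)
  obtain ⟨zpx, zpy⟩ := zp
  obtain ⟨zqx, zqy⟩ := zq
  simp only at hyeq
  subst hyeq
  have hmid : Relation.ReflTransGen (Step T) (zpx, zpy) (zqx, zpy) :=
    rowPath T ho.2 zpx zqx zpy hzp hzq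
  exact (hzppath.trans hmid).trans (((@Relation.ReflTransGen.stdSymm _ _ ⟨fun a b h => step_symm T h⟩).symm _ _) hzqpath)

lemma key {S : Finset (ℤ × ℤ)} (hc : ShapeConnected S) (ho : OrthoConvex S) (hne : S.Nonempty) :
    ∃ u ∈ S, (∀ v ∈ S, u.2 ≤ v.2) ∧ ((u.1 - 1, u.2) ∉ S ∨ (u.1 + 1, u.2) ∉ S) ∧
      ShapeConnected (S.erase u) ∧ OrthoConvex (S.erase u) := by
  classical
  have hne2 : (S.image Prod.snd).Nonempty := hne.image _
  set ymin := (S.image Prod.snd).min' hne2 with hymin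
  have hyle : ∀ v ∈ S, ymin ≤ v.2 := fun v hv => Finset.min'_le _ _ (Finset.mem_image_of_mem _ hv)
  have hrow0 : ∃ x : ℤ, (x, ymin) ∈ S := by
    have := (S.image Prod.snd).min'_mem hne2
    rw [← hymin] at this
    obtain ⟨v, hv, hv2⟩ := Finset.mem_image.mp this
    exact ⟨v.1, by rwa [show (v.1, ymin) = v by rw [← hv2]]⟩
  set R := (S.filter (fun v => v.2 = ymin)).image Prod.fst with hR
  have hRne : R.Nonempty := by
    obtain ⟨x, hx⟩ := hrow0
    exact ⟨x, Finset.mem_image.mpr ⟨(x, ymin), Finset.mem_filter.mpr ⟨hx, rfl⟩, rfl⟩⟩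
  set a := R.min' hRne with ha
  set b := R.max' hRne with hb
  have hmemR : ∀ x : ℤ, x ∈ R ↔ (x, ymin) ∈ S := by
    intro x
    constructor
    · intro hx
      obtain ⟨v, hv, hv2⟩ := Finset.mem_image.mp hx
      obtain ⟨hv3, hv4⟩ := Finset.mem_filter.mp hv
      rwa [show (x, ymin) = v by rw [← hv2, ← hv4]]
    · intro hx
      exact Finset.mem_image.mpr ⟨(x, ymin), Finset.mem_filter.mpr ⟨hx, rfl⟩, rfl⟩
  have haS : (a, ymin) ∈ S := (hmemR a).mp (R.min'_mem hRne)
  have hbS : (b, ymin) ∈ S := (hmemR b).mp (R.max'_mem hRne)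
  have hrange : ∀ x : ℤ, (x, ymin) ∈ S → a ≤ x ∧ x ≤ b := by
    intro x hx
    exact ⟨R.min'_le x ((hmemR x).mpr hx), R.le_max' x ((hmemR x).mpr hx)⟩
  have hseg : ∀ x : ℤ, a ≤ x → x ≤ b → (x, ymin) ∈ S := by
    intro x h1 h2
    rcases eq_or_lt_of_le h1 with h | h
    · rwa [← h]
    rcases eq_or_lt_of_le h2 with h' | h'
    · rwa [h']
    · exact ho.2 (a, ymin) haS (b, ymin) hbS rfl x (by simp [h]) (by simp [h'])
  -- orthoconvexity of erase
  have erase_oc : ∀ u : ℤ × ℤ, u ∈ S → u.2 = ymin → (u.1 = a ∨ u.1 = b) →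
      OrthoConvex (S.erase u) := by
    intro u huS huy hend
    constructor
    · intro p hp q hq hx y h1 h2
      have hp' := Finset.mem_of_mem_erase hp
      have hq' := Finset.mem_of_mem_erase hq
      have hS : (p.1, y) ∈ S := ho.1 p hp' q hq' hx y h1 h2
      refine Finset.mem_erase.mpr ⟨?_, hS⟩
      intro hcon
      have h3 := hyle p hp'
      have h4 := hyle q hq'
      have : y = ymin := by rw [← huy, ← hcon]
      omega
    · intro p hp q hq hy x h1 h2
      have hp' := Finset.mem_of_mem_erase hp
      have hq' := Finset.mem_of_mem_erase hq
      have hS : (x, p.2) ∈ S := ho.2 p hp' q hq' hy x h1 h2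
      refine Finset.mem_erase.mpr ⟨?_, hS⟩
      intro hcon
      have hpy : p.2 = ymin := by rw [← huy, ← hcon]
      have hxu : x = u.1 := by rw [← hcon]
      have hpr := hrange p.1 (by rw [← hpy]; simpa using hp')
      have hqr := hrange q.1 (by rw [← hpy, hy]; simpa using hq')
      rcases hend with he | he <;> omega
  -- connectivity of erase, given a safety witness condition
  have erase_conn : ∀ u : ℤ × ℤ, u ∈ S → u.2 = ymin →
      ((∃ p ∈ S, p.2 = ymin + 1) → (∃ q ∈ S, q.2 = ymin ∧ q ≠ u) →
        ∃ x' : ℤ, x' ≠ u.1 ∧ (x', ymin + 1) ∈ S ∧ (x', ymin) ∈ S) →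
      OrthoConvex (S.erase u) → ShapeConnected (S.erase u) := by
    intro u huS huy hsafe hoc
    apply conn _ hoc
    intro p hp ⟨q, hq, hqlt⟩
    have hp' := Finset.mem_of_mem_erase hp
    have hq' := Finset.mem_of_mem_erase hq
    have hpath : Relation.ReflTransGen (Step S) p q := hc p hp' q hq'
    obtain ⟨x, hx1, hx2⟩ := cross hpath (p.2 - 1) (by omega) (by omega)
    rw [show p.2 - 1 + 1 = p.2 by ring] at hx1
    have hqy : ymin ≤ q.2 := hyle q hq'
    rcases lt_or_ge ymin (p.2 - 1) with hcase | hcase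
    · refine ⟨x, Finset.mem_erase.mpr ⟨?_, hx1⟩, Finset.mem_erase.mpr ⟨?_, hx2⟩⟩
      · intro hcon; have := congrArg Prod.snd hcon; simp at this; omega
      · intro hcon; have := congrArg Prod.snd hcon; simp at this; omega
    · -- p.2 - 1 = ymin
      have hpy : p.2 = ymin + 1 := by omega
      have hqy2 : q.2 = ymin := by omega
      have hqne : q ≠ u := (Finset.mem_erase.mp hq).1
      obtain ⟨x', hx'1, hx'2, hx'3⟩ := hsafe ⟨p, hp', by omega⟩ ⟨q, hq', hqy2, hqne⟩
      refine ⟨x', ?_, ?_⟩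
      · rw [hpy]
        refine Finset.mem_erase.mpr ⟨?_, hx'2⟩
        intro hcon; have := congrArg Prod.snd hcon; simp at this; omega
      · rw [show p.2 - 1 = ymin by omega]
        refine Finset.mem_erase.mpr ⟨?_, hx'3⟩
        intro hcon; have := congrArg Prod.fst hcon; simp at this; exact hx'1 this
  by_cases hcase : (a, ymin + 1) ∈ S ∧ (a + 1, ymin + 1) ∉ S
  · -- remove right endpoint
    refine ⟨(b, ymin), hbS, fun v hv => hyle v hv, Or.inr ?_, ?_, ?_⟩
    · intro hcon; have := hrange _ hcon; omega
    · apply erase_conn (b, ymin) hbS rfl ?_ (erase_oc (b, ymin) hbS rfl (Or.inr rfl))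
      rintro - ⟨q, hqS, hqy, hqne⟩
      have hq' : (q.1, ymin) ∈ S := by rw [← hqy]; simpa using hqS
      have hqr := hrange q.1 hq'
      have hab : a < b := by
        rcases eq_or_lt_of_le hqr.2 with h | h
        · exfalso; apply hqne; rw [← hqy, ← h]
        · omega
      exact ⟨a, by omega, hcase.1, haS⟩
    · exact erase_oc (b, ymin) hbS rfl (Or.inr rfl)
  · -- remove left endpoint
    refine ⟨(a, ymin), haS, fun v hv => hyle v hv, Or.inl ?_, ?_, ?_⟩
    · intro hcon; have := hrange _ hcon; omega
    · apply erase_conn (a, ymin) haS rfl ?_ (erase_oc (a, ymin) haS rfl (Or.inl rfl))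
      rintro ⟨p, hpS, hpy⟩ ⟨q, hqS, hqy, hqne⟩
      have hq' : (q.1, ymin) ∈ S := by rw [← hqy]; simpa using hqS
      have hqr := hrange q.1 hq'
      have hab : a < b := by
        rcases eq_or_lt_of_le hqr.1 with h | h
        · exfalso; apply hqne; rw [← hqy, h]
        · omega
      -- find some column connecting row ymin+1 to row ymin
      have hpathp : Relation.ReflTransGen (Step S) p (a, ymin) := hc p hpS (a, ymin) haS
      obtain ⟨x, hx1, hx2⟩ := cross hpathp ymin (by simp) (by omega)
      by_cases hxa : x = a
      · push_neg at hcase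
        refine ⟨a + 1, by omega, hcase (by rwa [hxa] at hx1), hseg (a + 1) (by omega) (by omega)⟩
      · exact ⟨x, hxa, hx1, hx2⟩
    · exact erase_oc (a, ymin) haS rfl (Or.inl rfl)

def Goal (S : Finset (ℤ × ℤ)) : Prop :=
  ∃ L : List (ℤ × ℤ), L.Nodup ∧ L.toFinset = S ∧
    (∀ t : ℕ, ShapeConnected (S \ (L.take t).toFinset) ∧
      OrthoConvex (S \ (L.take t).toFinset)) ∧
    (∀ t : ℕ, ∀ ht : t < L.length,
      L.get ⟨t, ht⟩ ∈ S \ (L.take t).toFinset ∧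
      (∀ v ∈ S \ (L.take t).toFinset, (L.get ⟨t, ht⟩).2 ≤ v.2) ∧
      (((L.get ⟨t, ht⟩).1 - 1, (L.get ⟨t, ht⟩).2) ∉ S \ (L.take t).toFinset ∨
       ((L.get ⟨t, ht⟩).1 + 1, (L.get ⟨t, ht⟩).2) ∉ S \ (L.take t).toFinset))

lemma goal_empty : Goal ∅ := by
  refine ⟨[], by simp, by simp, ?_, ?_⟩
  · intro t
    refine ⟨?_, ?_, ?_⟩ <;> intro p hp <;> simp at hp
  · intro t ht
    simp at ht

lemma goal_main : ∀ n : ℕ, ∀ S : Finset (ℤ × ℤ), S.card ≤ n →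
    ShapeConnected S → OrthoConvex S → Goal S := by
  intro n
  induction n with
  | zero =>
    intro S hcard _ _
    have : S = ∅ := Finset.card_eq_zero.mp (Nat.le_antisymm hcard (Nat.zero_le _))
    rw [this]; exact goal_empty
  | succ n ih =>
    intro S hcard hc ho
    rcases S.eq_empty_or_nonempty with rfl | hne
    · exact goal_empty
    obtain ⟨u, huS, hymin, hend, hc', ho'⟩ := key hc ho hne
    have hcard' : (S.erase u).card ≤ n := by
      have := Finset.card_erase_of_mem huS
      omega
    obtain ⟨L', hnd', htf', hpre', hget'⟩ := ih (S.erase u) hcard' hc' ho'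
    have huL' : u ∉ L' := by
      intro h
      have : u ∈ S.erase u := htf' ▸ List.mem_toFinset.mpr h
      exact (Finset.mem_erase.mp this).1 rfl
    have hsets : ∀ t : ℕ, S \ ((u :: L').take (t + 1)).toFinset
        = (S.erase u) \ (L'.take t).toFinset := by
      intro t
      ext v
      simp only [List.take_succ_cons, List.toFinset_cons, Finset.mem_sdiff,
        Finset.mem_insert, Finset.mem_erase]
      tauto
    refine ⟨u :: L', List.nodup_cons.mpr ⟨huL', hnd'⟩, ?_, ?_, ?_⟩
    · simp [htf', Finset.insert_erase huS]
    · intro t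
      cases t with
      | zero => simpa using ⟨hc, ho⟩
      | succ t => rw [hsets t]; exact hpre' t
    · intro t ht
      cases t with
      | zero =>
        refine ⟨by simpa using huS, ?_, ?_⟩
        · intro v hv
          simp only [List.take_zero, List.toFinset_nil, Finset.sdiff_empty] at hv
          simpa using hymin v hv
        · simpa using hend
      | succ t =>
        have ht' : t < L'.length := by simpa using ht
        have hg : (u :: L').get ⟨t + 1, ht⟩ = L'.get ⟨t, ht'⟩ := rfl
        rw [hg, hsets t]
        exact hget' t ht'


/-- Every finite connected orthogonal convex shape admits a row elimination sequence:
an ordering of its cells such that each remaining shape is connected and orthogonal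
convex, and each removed cell lies in the current bottom-most row and is a horizontal
endpoint of it (so each row is eliminated as monotone runs from its endpoints,
row by row from the bottom). -/
theorem stmt8 (S : Finset (ℤ × ℤ)) (hc : ShapeConnected S) (ho : OrthoConvex S) :
    ∃ L : List (ℤ × ℤ), L.Nodup ∧ L.toFinset = S ∧
      (∀ t : ℕ, ShapeConnected (S \ (L.take t).toFinset) ∧
        OrthoConvex (S \ (L.take t).toFinset)) ∧
      (∀ t : ℕ, ∀ ht : t < L.length,
        L.get ⟨t, ht⟩ ∈ S \ (L.take t).toFinset ∧
        (∀ v ∈ S \ (L.take t).toFinset, (L.get ⟨t, ht⟩).2 ≤ v.2) ∧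
        (((L.get ⟨t, ht⟩).1 - 1, (L.get ⟨t, ht⟩).2) ∉ S \ (L.take t).toFinset ∨
         ((L.get ⟨t, ht⟩).1 + 1, (L.get ⟨t, ht⟩).2) ∉ S \ (L.take t).toFinset)) :=
  goal_main S.card S le_rfl hc ho
end

section
/- For any connected orthogonal convex shape S whose interior has an empty cell, a contradiction arises: if (x,y) is a cell not in S but lying in the interior of the perimeter of S, then the horizontal line through (x,y) meets S both to the left and to the right of (x,y), violating orthogonal convexity. Hence a connected orthogonal convex shape has no interior holes. -/
/-- `c` is a hole of `S`: it is empty but every infinite axis-parallel lattice path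
starting at `c` meets `S` (i.e. `c` is enclosed by `S`). -/
def IsHole (S : Finset (ℤ × ℤ)) (c : ℤ × ℤ) : Prop :=
  c ∉ S ∧ ∀ f : ℕ → ℤ × ℤ, f 0 = c → (∀ n, Adjacent (f n) (f (n + 1))) →
    Function.Injective f → ∃ n, f n ∈ S

theorem Adjacent.self_add {d : ℤ × ℤ} (hd : Adjacent 0 d) (p : ℤ × ℤ) : Adjacent p (p + d) := by
  obtain ⟨d₁, d₂⟩ := d
  simp only [Adjacent, Prod.fst_zero, Prod.snd_zero, Prod.fst_add, Prod.snd_add] at hd ⊢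
  omega

theorem Adjacent.ne_zero {d : ℤ × ℤ} (hd : Adjacent 0 d) : d ≠ 0 := by
  rintro rfl
  simp [Adjacent] at hd

theorem Adjacent.injective_nsmul {d : ℤ × ℤ} (hd : Adjacent 0 d) :
    Function.Injective fun n : ℕ => n • d :=
  injective_nsmul_iff_not_isOfFinAddOrder.2 <| (isOfFinAddOrder_iff_eq_zero d).not.2 hd.ne_zero

-- `Adjacent 0 d` says that `d` is one of the four unit axis vectors.
theorem IsHole.exists_mem_ray {S : Finset (ℤ × ℤ)} {c d : ℤ × ℤ} (h : IsHole S c)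
    (hd : Adjacent 0 d) : ∃ k : ℕ, 0 < k ∧ c + k • d ∈ S := by
  obtain ⟨hcS, henclosed⟩ := h
  obtain ⟨k, hk⟩ := henclosed (fun n => c + n • d) (by simp)
    (fun n => by simpa only [succ_nsmul, ← add_assoc] using hd.self_add (c + n • d))
    ((add_right_injective c).comp hd.injective_nsmul)
  refine ⟨k, Nat.pos_of_ne_zero ?_, hk⟩
  rintro rfl
  exact hcS (by simpa using hk)

theorem OrthoConvex.mem_of_mem_left_of_mem_right {S : Finset (ℤ × ℤ)} (ho : OrthoConvex S)
    {a b x y : ℤ} (ha : (a, y) ∈ S) (hb : (b, y) ∈ S) (hax : a < x) (hxb : x < b) :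
    (x, y) ∈ S :=
  ho.2 (a, y) ha (b, y) hb rfl x (by simp [hax]) (by simp [hxb])

theorem stmt13_general (S : Finset (ℤ × ℤ)) (ho : OrthoConvex S) :
    ∀ c : ℤ × ℤ, ¬ IsHole S c := by
  rintro ⟨x, y⟩ hhole
  obtain ⟨k, hk, hright⟩ := hhole.exists_mem_ray (d := (1, 0)) (by simp [Adjacent])
  obtain ⟨l, hl, hleft⟩ := hhole.exists_mem_ray (d := (-1, 0)) (by simp [Adjacent])
  simp only [Prod.smul_mk, nsmul_eq_mul, mul_one, mul_neg, smul_zero, Prod.mk_add_mk,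
    add_zero, ← sub_eq_add_neg] at hright hleft
  exact hhole.1 (ho.mem_of_mem_left_of_mem_right hleft hright (by omega) (by omega))

/-- A connected orthogonal convex shape has no interior holes. -/
theorem stmt13 (S : Finset (ℤ × ℤ)) (hc : ShapeConnected S) (ho : OrthoConvex S) :
    ∀ c : ℤ × ℤ, ¬ IsHole S c :=
  stmt13_general S ho
end

section
/- In any black-parity diagonal line-with-leaves generation sequence built column by column, every prefix has at most 2 more red cells than would be forced by the blacks: the number of red cells in any prefix exceeds the number that can be supported by the black cells by at most 2 (one extra red at each terminal column). -/
/-- The core of a diagonal line-with-leaves: k consecutive length-3 columns. -/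
def DLLcore (x₀ y₀ : ℤ) (k : ℕ) : Finset (ℤ × ℤ) :=
  (Finset.range k).biUnion
    (fun i => {(x₀ + i, y₀ + i), (x₀ + i, y₀ + i + 1), (x₀ + i, y₀ + i + 2)})

/-- A black-parity diagonal line-with-leaves: columns of 3 cells with black top and
bottom and red middle, plus an optional single red cell at each terminal end. -/
def IsBlackDLL (S : Finset (ℤ × ℤ)) : Prop :=
  ∃ (x₀ y₀ : ℤ) (k : ℕ) (eL eR : Bool), 1 ≤ k ∧ (x₀ + y₀) % 2 = 0 ∧
    S = DLLcore x₀ y₀ k ∪ (if eL then {(x₀ - 1, y₀)} else ∅) ∪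
        (if eR then {(x₀ + k, y₀ + k + 1)} else ∅)

lemma sumA (K : ℕ) (B M P : ℕ → Prop) [DecidablePred B] [DecidablePred M] [DecidablePred P]
    (HC : ∀ m, m + 1 < K → M m → (∃ j, j < K ∧ m < j ∧ (B j ∨ M j ∨ P j)) →
      B (m+1) ∨ (P m ∧ M (m+1))) :
    ∑ i ∈ Finset.range K,
      ((if M i then (1:ℤ) else 0) - (if B i then 1 else 0) - (if P i then 1 else 0)) ≤ 1 := by
  suffices h : ∀ n, n ≤ K →
      (∑ i ∈ Finset.range n,
        ((if M i then (1:ℤ) else 0) - (if B i then 1 else 0) - (if P i then 1 else 0)) ≤ 1 ∧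
      ((∑ i ∈ Finset.range n,
        ((if M i then (1:ℤ) else 0) - (if B i then 1 else 0) - (if P i then 1 else 0))) = 1 →
        ∀ j, n ≤ j → j < K → (B j ∨ M j ∨ P j) → B n)) by
    exact (h K le_rfl).1
  intro n
  induction n with
  | zero => intro _; simp
  | succ n ih =>
    intro hn
    obtain ⟨ih1, ih2⟩ := ih (by omega)
    rw [Finset.sum_range_succ]
    set Sn := ∑ i ∈ Finset.range n,
        ((if M i then (1:ℤ) else 0) - (if B i then 1 else 0) - (if P i then 1 else 0)) with hSn
    by_cases hB : B n <;> by_cases hM : M n <;> by_cases hP : P n <;>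
      simp only [if_pos, if_neg, hB, hM, hP, if_true, if_false]
    · exact ⟨by omega, by intro h; omega⟩
    · refine ⟨by omega, ?_⟩
      intro h j hj1 hj2 hocc
      have hm : n + 1 < K := by omega
      rcases HC n hm hM ⟨j, hj2, by omega, hocc⟩ with h' | ⟨h', _⟩
      · exact h'
      · exact absurd h' hP
    · exact ⟨by omega, by intro h; omega⟩
    · exact ⟨by omega, by intro h; omega⟩
    · refine ⟨by omega, ?_⟩
      intro h j hj1 hj2 hocc
      exact absurd (ih2 (by omega) n le_rfl (by omega) (Or.inr (Or.inl hM))) hB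
    · have hSn0 : Sn ≤ 0 := by
        rcases eq_or_lt_of_le ih1 with h1 | h1
        · exact absurd (ih2 h1 n le_rfl (by omega) (Or.inr (Or.inl hM))) hB
        · omega
      refine ⟨by omega, ?_⟩
      intro h j hj1 hj2 hocc
      have hm : n + 1 < K := by omega
      rcases HC n hm hM ⟨j, hj2, by omega, hocc⟩ with h' | ⟨h', _⟩
      · exact h'
      · exact absurd h' hP
    · exact ⟨by omega, by intro h; omega⟩
    · refine ⟨by omega, ?_⟩
      intro h j hj1 hj2 hocc
      exact absurd (ih2 (by omega) j (by omega) hj2 hocc) hB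

lemma sumB (K : ℕ) (B M P : ℕ → Prop) [DecidablePred B] [DecidablePred M] [DecidablePred P]
    (hB0 : B 0)
    (HC : ∀ m, m + 1 < K → M m → B (m+1) ∨ (P m ∧ M (m+1))) :
    ∑ i ∈ Finset.range K,
      ((if M i then (1:ℤ) else 0) - (if B i then 1 else 0) - (if P i then 1 else 0)) ≤ 0 := by
  suffices h : ∀ n, n ≤ K →
      (∑ i ∈ Finset.range n,
        ((if M i then (1:ℤ) else 0) - (if B i then 1 else 0) - (if P i then 1 else 0)) ≤ 0 ∧
      ((∑ i ∈ Finset.range n,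
        ((if M i then (1:ℤ) else 0) - (if B i then 1 else 0) - (if P i then 1 else 0))) = 0 →
        n < K → B n)) by
    exact (h K le_rfl).1
  intro n
  induction n with
  | zero => intro _; simpa using fun _ => hB0
  | succ n ih =>
    intro hn
    obtain ⟨ih1, ih2⟩ := ih (by omega)
    rw [Finset.sum_range_succ]
    set Sn := ∑ i ∈ Finset.range n,
        ((if M i then (1:ℤ) else 0) - (if B i then 1 else 0) - (if P i then 1 else 0)) with hSn
    by_cases hB : B n <;> by_cases hM : M n <;> by_cases hP : P n <;>
      simp only [if_pos, if_neg, hB, hM, hP, if_true, if_false]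
    · exact ⟨by omega, by intro h; omega⟩
    · refine ⟨by omega, ?_⟩
      intro h hk
      rcases HC n hk hM with h' | ⟨h', _⟩
      · exact h'
      · exact absurd h' hP
    · exact ⟨by omega, by intro h; omega⟩
    · exact ⟨by omega, by intro h; omega⟩
    · refine ⟨by omega, ?_⟩
      intro h hk
      have : Sn = 0 := by omega
      exact absurd (ih2 this (by omega)) hB
    · have hSn0 : Sn ≤ -1 := by
        rcases eq_or_lt_of_le ih1 with h1 | h1
        · exact absurd (ih2 h1 (by omega)) hB
        · omega
      refine ⟨by omega, ?_⟩
      intro h hk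
      rcases HC n hk hM with h' | ⟨h', _⟩
      · exact h'
      · exact absurd h' hP
    · exact ⟨by omega, by intro h; omega⟩
    · refine ⟨by omega, ?_⟩
      intro h hk
      exact absurd (ih2 (by omega) (by omega)) hB

lemma find_cross_step {T : Finset (ℤ × ℤ)} {c : ℤ} {p q : ℤ × ℤ}
    (h : Relation.ReflTransGen (fun a b => a ∈ T ∧ b ∈ T ∧ Adjacent a b) p q)
    (hp : p.1 ≤ c) (hq : c < q.1) :
    ∃ a b : ℤ × ℤ, a ∈ T ∧ b ∈ T ∧ a.1 = c ∧ b.1 = c + 1 ∧ a.2 = b.2 := by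
  induction h with
  | refl => omega
  | tail h' step ih =>
    rename_i x y
    by_cases hx : x.1 ≤ c
    · obtain ⟨hxT, hyT, hadj⟩ := step
      refine ⟨x, y, hxT, hyT, ?_, ?_, ?_⟩ <;>
        · rcases hadj with ⟨h1, h2⟩ | ⟨h1, h2⟩ <;> omega
    · exact ih (by omega)

lemma first_step {T : Finset (ℤ × ℤ)} {p q : ℤ × ℤ}
    (h : Relation.ReflTransGen (fun a b => a ∈ T ∧ b ∈ T ∧ Adjacent a b) p q)
    (hne : p ≠ q) :
    ∃ b : ℤ × ℤ, b ∈ T ∧ Adjacent p b := by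
  rcases Relation.ReflTransGen.cases_head h with h' | ⟨c, ⟨_, hcT, hadj⟩, _⟩
  · exact absurd h' hne
  · exact ⟨c, hcT, hadj⟩

/-- In any generation sequence of a black-parity diagonal line-with-leaves (every
prefix being a connected orthogonal convex sub-shape), every prefix has at most 2
more red cells than black cells. -/
theorem stmt15 (S : Finset (ℤ × ℤ)) (hS : IsBlackDLL S)
    (L : List (ℤ × ℤ)) (hnd : L.Nodup) (hsub : ∀ p ∈ L, p ∈ S)
    (hpref : ∀ n : ℕ, ShapeConnected (L.take n).toFinset ∧
      OrthoConvex (L.take n).toFinset) :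
    ∀ n : ℕ, rcount (L.take n).toFinset ≤ bcount (L.take n).toFinset + 2 := by
  obtain ⟨x₀, y₀, k, eL, eR, hk, hpar, hSeq⟩ := hS
  intro n
  set T := (L.take n).toFinset with hTdef
  have hTsub : T ⊆ S := by
    intro p hp
    exact hsub p (List.take_subset n L (List.mem_toFinset.mp hp))
  have hconn := (hpref n).1
  -- membership characterization of S
  have hmemS : ∀ p : ℤ × ℤ, p ∈ S ↔
      (∃ i : ℕ, i < k ∧ p.1 = x₀ + i ∧
        (p.2 = y₀ + i ∨ p.2 = y₀ + i + 1 ∨ p.2 = y₀ + i + 2)) ∨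
      (eL = true ∧ p.1 = x₀ - 1 ∧ p.2 = y₀) ∨
      (eR = true ∧ p.1 = x₀ + k ∧ p.2 = y₀ + k + 1) := by
    intro p
    rw [hSeq]
    cases eL <;> cases eR <;>
      simp [DLLcore, Prod.ext_iff, and_or_left] <;> simp only [or_assoc, or_comm, or_left_comm]
  -- the crossing lemma
  have hcross : ∀ m : ℕ, m + 1 < k → ∀ p q : ℤ × ℤ, p ∈ T → q ∈ T →
      p.1 ≤ x₀ + m → x₀ + m < q.1 →
      (((x₀ + m, y₀ + m + 1) : ℤ×ℤ) ∈ T ∧ ((x₀ + m + 1, y₀ + m + 1) : ℤ×ℤ) ∈ T) ∨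
      (((x₀ + m, y₀ + m + 2) : ℤ×ℤ) ∈ T ∧ ((x₀ + m + 1, y₀ + m + 2) : ℤ×ℤ) ∈ T) := by
    intro m hm p q hp hq hpx hqx
    obtain ⟨a, b, haT, hbT, hax, hbx, hay⟩ :=
      find_cross_step (hconn p hp q hq) hpx hqx
    have haS := (hmemS a).mp (hTsub haT)
    have hbS := (hmemS b).mp (hTsub hbT)
    have hgoalA : a.1 = x₀ + (m:ℤ) := hax
    -- a is in column m
    rcases haS with ⟨i, hik, hx, hy⟩ | ⟨_, hx, hy⟩ | ⟨_, hx, hy⟩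
    rotate_left
    · omega
    · omega
    have him : (i : ℤ) = m := by omega
    rcases hbS with ⟨j, hjk, hx', hy'⟩ | ⟨_, hx', hy'⟩ | ⟨_, hx', hy'⟩
    rotate_left
    · omega
    · omega
    have hjm : (j : ℤ) = m + 1 := by omega
    -- match the y-coordinates
    have ha2 : a.2 = y₀ + m + 1 ∨ a.2 = y₀ + m + 2 := by omega
    rcases ha2 with h2 | h2
    · left
      constructor
      · have : a = ((x₀ + m, y₀ + m + 1) : ℤ×ℤ) := by
          rw [Prod.ext_iff]; exact ⟨by omega, by omega⟩
        rwa [this] at haT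
      · have : b = ((x₀ + m + 1, y₀ + m + 1) : ℤ×ℤ) := by
          rw [Prod.ext_iff]; exact ⟨by omega, by omega⟩
        rwa [this] at hbT
    · right
      constructor
      · have : a = ((x₀ + m, y₀ + m + 2) : ℤ×ℤ) := by
          rw [Prod.ext_iff]; exact ⟨by omega, by omega⟩
        rwa [this] at haT
      · have : b = ((x₀ + m + 1, y₀ + m + 2) : ℤ×ℤ) := by
          rw [Prod.ext_iff]; exact ⟨by omega, by omega⟩
        rwa [this] at hbT
  -- counting setup
  have key1 : (rcount T : ℤ) - (bcount T : ℤ) =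
      ∑ p ∈ S, (if p ∈ T then (if (p.1 + p.2) % 2 = 0 then (-1:ℤ) else 1) else 0) := by
    have h1 : ∑ p ∈ S, (if p ∈ T then (if (p.1 + p.2) % 2 = 0 then (-1:ℤ) else 1) else 0)
        = ∑ p ∈ T, (if (p.1 + p.2) % 2 = 0 then (-1:ℤ) else 1) := by
      rw [← Finset.sum_subset hTsub (fun x _ hx => by simp [hx])]
      exact Finset.sum_congr rfl fun x hx => by simp [hx]
    rw [h1, ← Finset.sum_filter_add_sum_filter_not T (fun p => (p.1 + p.2) % 2 = 0)]
    have h2 : ∑ p ∈ T.filter (fun p => (p.1 + p.2) % 2 = 0),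
        (if (p.1 + p.2) % 2 = 0 then (-1:ℤ) else 1) = -(bcount T : ℤ) := by
      rw [Finset.sum_congr rfl (fun x hx => if_pos (Finset.mem_filter.mp hx).2),
        Finset.sum_const]
      simp [bcount]
    have h3 : ∑ p ∈ T.filter (fun p => ¬((p.1 + p.2) % 2 = 0)),
        (if (p.1 + p.2) % 2 = 0 then (-1:ℤ) else 1) = (rcount T : ℤ) := by
      rw [Finset.sum_congr rfl (fun x hx => if_neg (Finset.mem_filter.mp hx).2),
        Finset.sum_const]
      simp [rcount]
    rw [h2, h3]
    ring
  -- decomposition of the sum over S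
  have hcoreX : ∀ p ∈ DLLcore x₀ y₀ k, x₀ ≤ p.1 ∧ p.1 < x₀ + k := by
    intro p hp
    simp only [DLLcore, Finset.mem_biUnion, Finset.mem_range, Finset.mem_insert,
      Finset.mem_singleton] at hp
    obtain ⟨i, hik, h⟩ := hp
    rcases h with h | h | h <;> subst h <;> constructor <;> simp <;> omega
  have hd1 : Disjoint (DLLcore x₀ y₀ k)
      (if eL then ({((x₀ - 1 : ℤ), y₀)} : Finset (ℤ×ℤ)) else ∅) := by
    cases eL
    · simp
    · simp only [if_true]
      rw [Finset.disjoint_singleton_right]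
      intro hmem
      have := hcoreX _ hmem
      simp only at this
      omega
  have hd2 : Disjoint
      (DLLcore x₀ y₀ k ∪ (if eL then ({((x₀-1:ℤ), y₀)} : Finset (ℤ×ℤ)) else ∅))
      (if eR then ({((x₀ + (k:ℤ), y₀ + (k:ℤ) + 1) : ℤ×ℤ)} : Finset (ℤ×ℤ)) else ∅) := by
    cases eR
    · simp
    · simp only [if_true]
      rw [Finset.disjoint_singleton_right, Finset.mem_union]
      rintro (hmem | hmem)
      · have := hcoreX _ hmem
        simp only at this
        omega
      · cases eL
        · simp at hmem
        · simp only [if_true, Finset.mem_singleton, Prod.ext_iff] at hmem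
          omega
  have hpw : (↑(Finset.range k) : Set ℕ).PairwiseDisjoint
      (fun i : ℕ => ({((x₀+(i:ℤ), y₀+i) : ℤ×ℤ), (x₀+(i:ℤ), y₀+i+1), (x₀+(i:ℤ), y₀+i+2)} :
        Finset (ℤ×ℤ))) := by
    intro i _ j _ hij
    apply Finset.disjoint_left.mpr
    intro p hp hq
    simp only [Finset.mem_insert, Finset.mem_singleton, Prod.ext_iff] at hp hq
    have hij' : (i : ℤ) ≠ (j : ℤ) := by exact_mod_cast hij
    rcases hp with ⟨h1, h2⟩ | ⟨h1, h2⟩ | ⟨h1, h2⟩ <;>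
      rcases hq with ⟨h3, h4⟩ | ⟨h3, h4⟩ | ⟨h3, h4⟩ <;> omega
  have key2 : ∑ p ∈ S, (if p ∈ T then (if (p.1 + p.2) % 2 = 0 then (-1:ℤ) else 1) else 0) ≤
      (∑ i ∈ Finset.range k,
        ((if ((x₀+(i:ℤ), y₀+i+1) : ℤ×ℤ) ∈ T then (1:ℤ) else 0)
          - (if ((x₀+(i:ℤ), y₀+i) : ℤ×ℤ) ∈ T then 1 else 0)
          - (if ((x₀+(i:ℤ), y₀+i+2) : ℤ×ℤ) ∈ T then 1 else 0)))
      + (if ((x₀-1, y₀) : ℤ×ℤ) ∈ T then (1:ℤ) else 0)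
      + (if ((x₀+(k:ℤ), y₀+k+1) : ℤ×ℤ) ∈ T then (1:ℤ) else 0) := by
    rw [hSeq, Finset.sum_union hd2, Finset.sum_union hd1]
    have hcore : ∑ p ∈ DLLcore x₀ y₀ k,
        (if p ∈ T then (if (p.1 + p.2) % 2 = 0 then (-1:ℤ) else 1) else 0) =
        ∑ i ∈ Finset.range k,
        ((if ((x₀+(i:ℤ), y₀+i+1) : ℤ×ℤ) ∈ T then (1:ℤ) else 0)
          - (if ((x₀+(i:ℤ), y₀+i) : ℤ×ℤ) ∈ T then 1 else 0)
          - (if ((x₀+(i:ℤ), y₀+i+2) : ℤ×ℤ) ∈ T then 1 else 0)) := by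
      rw [DLLcore, Finset.sum_biUnion hpw]
      refine Finset.sum_congr rfl fun i hi => ?_
      rw [Finset.sum_insert (by
            simp only [Finset.mem_insert, Finset.mem_singleton, Prod.ext_iff, true_and]
            omega),
          Finset.sum_insert (by
            simp only [Finset.mem_singleton, Prod.ext_iff, true_and]
            omega),
          Finset.sum_singleton]
      show (if ((x₀+(i:ℤ), y₀+i) : ℤ×ℤ) ∈ T then
              (if ((x₀+(i:ℤ)) + (y₀+(i:ℤ))) % 2 = 0 then (-1:ℤ) else 1) else 0)
          + ((if ((x₀+(i:ℤ), y₀+i+1) : ℤ×ℤ) ∈ T then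
              (if ((x₀+(i:ℤ)) + (y₀+(i:ℤ)+1)) % 2 = 0 then (-1:ℤ) else 1) else 0)
          + (if ((x₀+(i:ℤ), y₀+i+2) : ℤ×ℤ) ∈ T then
              (if ((x₀+(i:ℤ)) + (y₀+(i:ℤ)+2)) % 2 = 0 then (-1:ℤ) else 1) else 0)) = _
      have e1 : ((x₀+(i:ℤ)) + (y₀+(i:ℤ))) % 2 = 0 := by omega
      have e2 : ¬(((x₀+(i:ℤ)) + (y₀+(i:ℤ)+1)) % 2 = 0) := by omega
      have e3 : ((x₀+(i:ℤ)) + (y₀+(i:ℤ)+2)) % 2 = 0 := by omega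
      rw [if_pos e1, if_neg e2, if_pos e3]
      split_ifs <;> ring
    rw [hcore]
    have hL : ∑ p ∈ (if eL then ({((x₀-1:ℤ), y₀)} : Finset (ℤ×ℤ)) else ∅),
        (if p ∈ T then (if (p.1 + p.2) % 2 = 0 then (-1:ℤ) else 1) else 0) ≤
        (if ((x₀-1, y₀) : ℤ×ℤ) ∈ T then (1:ℤ) else 0) := by
      cases eL
      · simp only [Bool.false_eq_true, if_false, Finset.sum_empty]
        split_ifs <;> norm_num
      · simp only [if_true, Finset.sum_singleton]
        have e : ¬(((x₀-1:ℤ) + y₀) % 2 = 0) := by omega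
        show (if ((x₀-1, y₀) : ℤ×ℤ) ∈ T then
            (if ((x₀-1:ℤ) + y₀) % 2 = 0 then (-1:ℤ) else 1) else 0) ≤ _
        rw [if_neg e]
    have hR : ∑ p ∈ (if eR then ({((x₀+(k:ℤ), y₀+(k:ℤ)+1) : ℤ×ℤ)} : Finset (ℤ×ℤ)) else ∅),
        (if p ∈ T then (if (p.1 + p.2) % 2 = 0 then (-1:ℤ) else 1) else 0) ≤
        (if ((x₀+(k:ℤ), y₀+k+1) : ℤ×ℤ) ∈ T then (1:ℤ) else 0) := by
      cases eR
      · simp only [Bool.false_eq_true, if_false, Finset.sum_empty]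
        split_ifs <;> norm_num
      · simp only [if_true, Finset.sum_singleton]
        have e : ¬(((x₀+(k:ℤ)) + (y₀+(k:ℤ)+1)) % 2 = 0) := by omega
        show (if ((x₀+(k:ℤ), y₀+k+1) : ℤ×ℤ) ∈ T then
            (if ((x₀+(k:ℤ)) + (y₀+(k:ℤ)+1)) % 2 = 0 then (-1:ℤ) else 1) else 0) ≤ _
        rw [if_neg e]
    linarith [hL, hR]
  -- bound the combinatorial sum
  have main : (∑ i ∈ Finset.range k,
        ((if ((x₀+(i:ℤ), y₀+i+1) : ℤ×ℤ) ∈ T then (1:ℤ) else 0)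
          - (if ((x₀+(i:ℤ), y₀+i) : ℤ×ℤ) ∈ T then 1 else 0)
          - (if ((x₀+(i:ℤ), y₀+i+2) : ℤ×ℤ) ∈ T then 1 else 0)))
      + (if ((x₀-1, y₀) : ℤ×ℤ) ∈ T then (1:ℤ) else 0)
      + (if ((x₀+(k:ℤ), y₀+k+1) : ℤ×ℤ) ∈ T then (1:ℤ) else 0) ≤ 2 := by
    by_cases hboth : ((x₀-1, y₀) : ℤ×ℤ) ∈ T ∧ ((x₀+(k:ℤ), y₀+k+1) : ℤ×ℤ) ∈ T
    · obtain ⟨hLm, hRm⟩ := hboth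
      -- the left leaf forces the bottom of column 0 to be present
      have hne : ((x₀-1, y₀) : ℤ×ℤ) ≠ (x₀+(k:ℤ), y₀+k+1) := by
        rw [Ne, Prod.ext_iff]
        rintro ⟨h1, h2⟩
        omega
      obtain ⟨b, hbT, hadj⟩ := first_step (hconn _ hLm _ hRm) hne
      have hbS := (hmemS b).mp (hTsub hbT)
      have hadj' : (x₀ - 1 = b.1 ∧ (y₀ = b.2 + 1 ∨ b.2 = y₀ + 1)) ∨
          (y₀ = b.2 ∧ (x₀ - 1 = b.1 + 1 ∨ b.1 = x₀ - 1 + 1)) := hadj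
      have hb0 : ((x₀+((0:ℕ):ℤ), y₀+((0:ℕ):ℤ)) : ℤ×ℤ) ∈ T := by
        have : b = ((x₀+((0:ℕ):ℤ), y₀+((0:ℕ):ℤ)) : ℤ×ℤ) := by
          rw [Prod.ext_iff]
          rcases hbS with ⟨i, hik, hx, hy⟩ | ⟨_, hx, hy⟩ | ⟨_, hx, hy⟩ <;>
            rcases hadj' with ⟨h1, h2⟩ | ⟨h1, h2⟩ <;>
            constructor <;> simp only [] <;> omega
        rwa [this] at hbT
      have HC' : ∀ m : ℕ, m + 1 < k → ((x₀+(m:ℤ), y₀+m+1) : ℤ×ℤ) ∈ T →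
          ((x₀+((m+1:ℕ):ℤ), y₀+((m+1:ℕ):ℤ)) : ℤ×ℤ) ∈ T ∨
          (((x₀+(m:ℤ), y₀+m+2) : ℤ×ℤ) ∈ T ∧
            ((x₀+((m+1:ℕ):ℤ), y₀+((m+1:ℕ):ℤ)+1) : ℤ×ℤ) ∈ T) := by
        intro m hm hMm
        have hqx : x₀ + (m:ℤ) < ((x₀+(k:ℤ), y₀+k+1) : ℤ×ℤ).1 := by
          simp only []
          omega
        have e1 : ((x₀+((m+1:ℕ):ℤ), y₀+((m+1:ℕ):ℤ)) : ℤ×ℤ) = (x₀+(m:ℤ)+1, y₀+m+1) := by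
          rw [Prod.ext_iff]; constructor <;> simp only [] <;> omega
        have e2 : ((x₀+((m+1:ℕ):ℤ), y₀+((m+1:ℕ):ℤ)+1) : ℤ×ℤ) = (x₀+(m:ℤ)+1, y₀+m+2) := by
          rw [Prod.ext_iff]; constructor <;> simp only [] <;> omega
        rcases hcross m hm (x₀+(m:ℤ), y₀+(m:ℤ)+1) _ hMm hRm (le_refl _) hqx with
          ⟨h1, h2⟩ | ⟨h1, h2⟩
        · left; rw [e1]; exact h2
        · right
          exact ⟨h1, by rw [e2]; exact h2⟩
      have hsum : ∑ i ∈ Finset.range k,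
          ((if ((x₀+(i:ℤ), y₀+i+1) : ℤ×ℤ) ∈ T then (1:ℤ) else 0)
            - (if ((x₀+(i:ℤ), y₀+i) : ℤ×ℤ) ∈ T then 1 else 0)
            - (if ((x₀+(i:ℤ), y₀+i+2) : ℤ×ℤ) ∈ T then 1 else 0)) ≤ 0 :=
        sumB k (fun i => ((x₀+(i:ℤ), y₀+i) : ℤ×ℤ) ∈ T)
          (fun i => ((x₀+(i:ℤ), y₀+i+1) : ℤ×ℤ) ∈ T)
          (fun i => ((x₀+(i:ℤ), y₀+i+2) : ℤ×ℤ) ∈ T) hb0 HC'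
      rw [if_pos hLm, if_pos hRm]
      linarith
    · have HC : ∀ m : ℕ, m + 1 < k → ((x₀+(m:ℤ), y₀+m+1) : ℤ×ℤ) ∈ T →
          (∃ j, j < k ∧ m < j ∧ (((x₀+(j:ℤ), y₀+j) : ℤ×ℤ) ∈ T ∨
            ((x₀+(j:ℤ), y₀+j+1) : ℤ×ℤ) ∈ T ∨ ((x₀+(j:ℤ), y₀+j+2) : ℤ×ℤ) ∈ T)) →
          ((x₀+((m+1:ℕ):ℤ), y₀+((m+1:ℕ):ℤ)) : ℤ×ℤ) ∈ T ∨
          (((x₀+(m:ℤ), y₀+m+2) : ℤ×ℤ) ∈ T ∧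
            ((x₀+((m+1:ℕ):ℤ), y₀+((m+1:ℕ):ℤ)+1) : ℤ×ℤ) ∈ T) := by
        intro m hm hMm hex
        obtain ⟨j, hjk, hmj, hocc⟩ := hex
        have hmj' : x₀ + (m:ℤ) < x₀ + (j:ℤ) := by omega
        have e1 : ((x₀+((m+1:ℕ):ℤ), y₀+((m+1:ℕ):ℤ)) : ℤ×ℤ) = (x₀+(m:ℤ)+1, y₀+m+1) := by
          rw [Prod.ext_iff]; constructor <;> simp only [] <;> omega
        have e2 : ((x₀+((m+1:ℕ):ℤ), y₀+((m+1:ℕ):ℤ)+1) : ℤ×ℤ) = (x₀+(m:ℤ)+1, y₀+m+2) := by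
          rw [Prod.ext_iff]; constructor <;> simp only [] <;> omega
        have step : (((x₀ + (m:ℤ), y₀ + m + 1) : ℤ×ℤ) ∈ T ∧
              ((x₀ + (m:ℤ) + 1, y₀ + m + 1) : ℤ×ℤ) ∈ T) ∨
            (((x₀ + (m:ℤ), y₀ + m + 2) : ℤ×ℤ) ∈ T ∧
              ((x₀ + (m:ℤ) + 1, y₀ + m + 2) : ℤ×ℤ) ∈ T) := by
          rcases hocc with h | h | h
          · exact hcross m hm (x₀+(m:ℤ), y₀+(m:ℤ)+1) _ hMm h (le_refl _) hmj'
          · exact hcross m hm (x₀+(m:ℤ), y₀+(m:ℤ)+1) _ hMm h (le_refl _) hmj'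
          · exact hcross m hm (x₀+(m:ℤ), y₀+(m:ℤ)+1) _ hMm h (le_refl _) hmj'
        rcases step with ⟨h1, h2⟩ | ⟨h1, h2⟩
        · left; rw [e1]; exact h2
        · right; exact ⟨h1, by rw [e2]; exact h2⟩
      have hsum : ∑ i ∈ Finset.range k,
          ((if ((x₀+(i:ℤ), y₀+i+1) : ℤ×ℤ) ∈ T then (1:ℤ) else 0)
            - (if ((x₀+(i:ℤ), y₀+i) : ℤ×ℤ) ∈ T then 1 else 0)
            - (if ((x₀+(i:ℤ), y₀+i+2) : ℤ×ℤ) ∈ T then 1 else 0)) ≤ 1 :=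
        sumA k (fun i => ((x₀+(i:ℤ), y₀+i) : ℤ×ℤ) ∈ T)
          (fun i => ((x₀+(i:ℤ), y₀+i+1) : ℤ×ℤ) ∈ T)
          (fun i => ((x₀+(i:ℤ), y₀+i+2) : ℤ×ℤ) ∈ T) HC
      have hleaf : (if ((x₀-1, y₀) : ℤ×ℤ) ∈ T then (1:ℤ) else 0)
          + (if ((x₀+(k:ℤ), y₀+k+1) : ℤ×ℤ) ∈ T then (1:ℤ) else 0) ≤ 1 := by
        by_cases h1 : ((x₀-1, y₀) : ℤ×ℤ) ∈ T <;>
          by_cases h2 : ((x₀+(k:ℤ), y₀+k+1) : ℤ×ℤ) ∈ T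
        · exact absurd ⟨h1, h2⟩ hboth
        all_goals simp [h1, h2]
      linarith
  have final : (rcount T : ℤ) - (bcount T : ℤ) ≤ 2 := by
    rw [key1]
    linarith
  omega
end

section
/- For the staircase shape of n cells, any cell-by-cell transformation into a horizontal line (moving one cell per step to an adjacent position) requires Ω(n^2) total single-cell moves, because the sum over cells of the L1 distance between the staircase and the line configurations is Ω(n^2). -/
/-!
Every cell of the staircase at index `i` sits at height `⌊(i+1)/2⌋`, while every cell of the
line sits at height `0`. A move of L1 length at most `d` changes the total height `∑ |y|` by
at most `d`, so the number of moves is at least the total height of the staircase divided by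
`d = 2`, and that total height is `⌊n²/4⌋`.
-/

/-- The i-th cell (0-indexed) of the staircase: (⌈(i+1)/2⌉, ⌊(i+1)/2⌋). -/
def stairCell (i : ℕ) : ℤ × ℤ := (((i + 2) / 2 : ℕ), (((i + 1) / 2 : ℕ) : ℤ))

def dist1 (p q : ℤ × ℤ) : ℤ := |p.1 - q.1| + |p.2 - q.2|

open Finset

lemma abs_snd_sub_abs_snd_le_dist1 (p q : ℤ × ℤ) : |p.2| - |q.2| ≤ dist1 p q := by
  have := abs_sub_abs_le_abs_sub p.2 q.2
  have := abs_nonneg (p.1 - q.1)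
  unfold dist1
  linarith

section Height

variable {ι : Type*} [Fintype ι]

def heightSum (c : ι → ℤ × ℤ) : ℤ := ∑ j, |(c j).2|

lemma heightSum_eq_zero_of_snd_eq_zero {c : ι → ℤ × ℤ} (h : ∀ j, (c j).2 = 0) :
    heightSum c = 0 :=
  sum_eq_zero fun j _ => by rw [h j, abs_zero]

lemma heightSum_le_of_eq_of_ne {c c' : ι → ℤ × ℤ} {j : ι} (h : ∀ i, i ≠ j → c' i = c i) :
    heightSum c ≤ heightSum c' + dist1 (c j) (c' j) := by
  have hdiff : heightSum c - heightSum c' = |(c j).2| - |(c' j).2| := by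
    rw [heightSum, heightSum, ← sum_sub_distrib, sum_eq_single j]
    · intro i _ hi
      rw [h i hi, sub_self]
    · exact fun hj => absurd (mem_univ j) hj
  linarith [abs_snd_sub_abs_snd_le_dist1 (c j) (c' j)]

lemma heightSum_le_add_mul_of_moves (f : ℕ → ι → ℤ × ℤ) (d : ℤ) (T : ℕ)
    (hstep : ∀ t < T, ∃ j : ι,
      (∀ i : ι, i ≠ j → f (t + 1) i = f t i) ∧ dist1 (f t j) (f (t + 1) j) ≤ d) :
    heightSum (f 0) ≤ heightSum (f T) + d * T := by
  induction T with
  | zero => simp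
  | succ T ih =>
    have hprev := ih fun t ht => hstep t (Nat.lt_succ_of_lt ht)
    obtain ⟨j, hfix, hd⟩ := hstep T (Nat.lt_succ_self T)
    have hlast := heightSum_le_of_eq_of_ne hfix
    push_cast
    linarith

end Height

lemma four_mul_sum_range_succ_div_two (n : ℕ) :
    4 * ∑ i ∈ range n, (i + 1) / 2 + n % 2 = n * n := by
  induction n with
  | zero => simp
  | succ n ih =>
    rw [sum_range_succ]
    have : (n + 1) * (n + 1) = n * n + 2 * n + 1 := by ring
    omega

lemma heightSum_stairCell (n : ℕ) :
    heightSum (fun j : Fin n => stairCell j) = ((∑ i ∈ range n, (i + 1) / 2 : ℕ) : ℤ) := by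
  rw [heightSum, Nat.cast_sum, ← Fin.sum_univ_eq_sum_range (fun i => (((i + 1) / 2 : ℕ) : ℤ))]
  exact sum_congr rfl fun j _ => abs_of_nonneg (Int.natCast_nonneg _)

theorem stmt16_general (n T : ℕ) (hn : 2 ≤ n) (f : ℕ → Fin n → ℤ × ℤ)
    (hstart : ∀ j : Fin n, f 0 j = stairCell j)
    (hend : ∀ j : Fin n, ∃ m : Fin n, f T j = ((m : ℤ) + 1, 0))
    (hstep : ∀ t < T, ∃ j : Fin n,
      (∀ i : Fin n, i ≠ j → f (t + 1) i = f t i) ∧ dist1 (f t j) (f (t + 1) j) ≤ 2) :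
    n * n ≤ 16 * T := by
  have hmoves := heightSum_le_add_mul_of_moves f 2 T hstep
  have hline : heightSum (f T) = 0 := heightSum_eq_zero_of_snd_eq_zero fun j => by
    obtain ⟨m, hm⟩ := hend j
    rw [hm]
  rw [hline, zero_add, funext hstart, heightSum_stairCell] at hmoves
  have hsum : ∑ i ∈ range n, (i + 1) / 2 ≤ 2 * T := by exact_mod_cast hmoves
  have := four_mul_sum_range_succ_div_two n
  have := Nat.mul_le_mul hn hn
  -- `n² ≤ 8T + 1`; the case `T = 0` is ruled out by `n² ≥ 4`.
  omega

/-- Any transformation from the staircase of n cells to a horizontal line of n cells,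
moving one cell per step by L1 distance at most 2 (as rotations do), takes Ω(n²)
steps: T ≥ n²/16, since any matching between the two configurations has total L1
cost Ω(n²). -/
theorem stmt16 (n T : ℕ) (hn : 2 ≤ n) (f : ℕ → Fin n → ℤ × ℤ)
    (hinj : ∀ t : ℕ, Function.Injective (f t))
    (hstart : ∀ j : Fin n, f 0 j = stairCell j)
    (hend : ∀ j : Fin n, ∃ m : Fin n, f T j = ((m : ℤ) + 1, 0))
    (hstep : ∀ t < T, ∃ j : Fin n,
      (∀ i : Fin n, i ≠ j → f (t + 1) i = f t i) ∧ dist1 (f t j) (f (t + 1) j) ≤ 2) :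
    n * n ≤ 16 * T :=
  stmt16_general n T hn f hstart hend hstep
end

section
/- Under rotation moves on the chessboard-coloured grid, the multiset of colours of cells occupied by the nodes is invariant: a node at a black cell can only ever move to black cells, and similarly for red. Hence if shape A transforms to shape B by rotations, then A and B are colour-consistent (b(A) = b(B) and r(A) = r(B)). -/
/-- A single rotation move: node `p` rotates 90° around its neighbour `v` to the
diagonally adjacent empty cell `q`, the swept intermediate cell being empty. -/
def RotMove (S T : Finset (ℤ × ℤ)) : Prop :=
  ∃ p v q : ℤ × ℤ, p ∈ S ∧ v ∈ S ∧ v ≠ p ∧ Adjacent p v ∧ Adjacent q v ∧ q ∉ S ∧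
    |q.1 - p.1| = 1 ∧ |q.2 - p.2| = 1 ∧
    (∀ w : ℤ × ℤ, Adjacent w p → Adjacent w q → w ≠ v → w ∉ S) ∧
    T = insert q (S.erase p)

/-! A rotation moves a node diagonally, changing both coordinates by one, so the parity of
`x + y` of the moving node is unchanged; every count of nodes by colour is therefore preserved. -/

theorem Finset.card_filter_insert_erase {α : Type*} [DecidableEq α] (P : α → Prop)
    [DecidablePred P] {S : Finset α} {p q : α} (hp : p ∈ S) (hq : q ∉ S) (hpq : P p ↔ P q) :
    ((insert q (S.erase p)).filter P).card = (S.filter P).card := by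
  rw [Finset.filter_insert, Finset.filter_erase]
  by_cases hPq : P q
  · have hq' : q ∉ (S.filter P).erase p := fun h =>
      hq (Finset.mem_filter.mp (Finset.mem_of_mem_erase h)).1
    rw [if_pos hPq, Finset.card_insert_of_notMem hq',
      Finset.card_erase_add_one (Finset.mem_filter.mpr ⟨hp, hpq.mpr hPq⟩)]
  · rw [if_neg hPq, Finset.erase_eq_of_notMem fun h => hPq (hpq.mp (Finset.mem_filter.mp h).2)]

theorem RotMove.exists_parity_eq {S T : Finset (ℤ × ℤ)} (h : RotMove S T) :
    ∃ p ∈ S, ∃ q ∉ S, (p.1 + p.2) % 2 = (q.1 + q.2) % 2 ∧ T = insert q (S.erase p) := by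
  obtain ⟨p, -, q, hp, -, -, -, -, hq, h1, h2, -, hT⟩ := h
  have hd1 := (abs_eq zero_le_one).mp h1
  have hd2 := (abs_eq zero_le_one).mp h2
  exact ⟨p, hp, q, hq, by omega, hT⟩

theorem RotMove.card_filter_parity_eq (P : ℤ → Prop) [DecidablePred P] {S T : Finset (ℤ × ℤ)}
    (h : RotMove S T) :
    (S.filter fun p => P ((p.1 + p.2) % 2)).card =
      (T.filter fun p => P ((p.1 + p.2) % 2)).card := by
  obtain ⟨p, hp, q, hq, hpar, rfl⟩ := h.exists_parity_eq
  exact (Finset.card_filter_insert_erase _ hp hq (by rw [hpar])).symm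

theorem RotMove.colour_counts_eq {S T : Finset (ℤ × ℤ)} (h : RotMove S T) :
    bcount S = bcount T ∧ rcount S = rcount T :=
  ⟨h.card_filter_parity_eq (· = 0), h.card_filter_parity_eq (· ≠ 0)⟩

/-- Rotation moves preserve chessboard colours: each single move keeps the counts of
black-cell and red-cell nodes, hence any shape reachable by rotations is
colour-consistent with the original. -/
theorem stmt17 :
    (∀ S T : Finset (ℤ × ℤ), RotMove S T →
      bcount S = bcount T ∧ rcount S = rcount T) ∧
    (∀ A B : Finset (ℤ × ℤ), Relation.ReflTransGen RotMove A B →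
      bcount A = bcount B ∧ rcount A = rcount B) := by
  refine ⟨fun S T h => h.colour_counts_eq, fun A B h => ?_⟩
  induction h with
  | refl => exact ⟨rfl, rfl⟩
  | tail _ hmove ih =>
    have hcounts := RotMove.colour_counts_eq hmove
    exact ⟨ih.1.trans hcounts.1, ih.2.trans hcounts.2⟩
end

section
/- The parity rhombus is 0-blocked under rotation moves: in the shape {(x,y) : |x| + |y| ≤ k} all rotation moves are disabled, i.e., no single node can perform a legal 90° rotation (which requires its two swept cells to be empty) without the resulting shape being disconnected or the move being geometrically blocked. -/
/-- The rhombus of radius k. -/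
noncomputable def rhombus (k : ℤ) : Finset (ℤ × ℤ) :=
  (Finset.Icc (-k) k ×ˢ Finset.Icc (-k) k).filter (fun p => |p.1| + |p.2| ≤ k)

lemma mem_rhombus (k : ℤ) (p : ℤ × ℤ) :
    p ∈ rhombus k ↔ |p.1| + |p.2| ≤ k := by
  simp only [rhombus, Finset.mem_filter, Finset.mem_product, Finset.mem_Icc,
    Int.abs_eq_natAbs]
  omega

/-- The parity rhombus is 0-blocked: no connectivity-preserving rotation move is
possible from it. -/
theorem stmt18 (k : ℤ) (hk : 1 ≤ k) :
    ¬ ∃ T : Finset (ℤ × ℤ), RotMove (rhombus k) T ∧ ShapeConnected T := by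
  rintro ⟨T, ⟨p, v, q, hp, hv, hvp, hpv, hqv, hq, hdx, hdy, hblock, hT⟩, hconn⟩
  rw [mem_rhombus] at hp hv
  rw [mem_rhombus] at hq
  rw [Int.abs_eq_natAbs] at hdx hdy
  simp only [Int.abs_eq_natAbs] at hp hv hq
  obtain ⟨p1, p2⟩ := p
  obtain ⟨v1, v2⟩ := v
  obtain ⟨q1, q2⟩ := q
  simp only [Adjacent] at hpv hqv
  dsimp only at *
  -- determine v: either (p1, q2) or (q1, p2)
  have hx : q1 = p1 + 1 ∨ p1 = q1 + 1 := by omega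
  have hy : q2 = p2 + 1 ∨ p2 = q2 + 1 := by omega
  have hvcase : (v1 = p1 ∧ v2 = q2) ∨ (v1 = q1 ∧ v2 = p2) := by
    rcases hpv with ⟨h1, h2⟩ | ⟨h1, h2⟩ <;> rcases hqv with ⟨h3, h4⟩ | ⟨h3, h4⟩ <;> omega
  rcases hvcase with ⟨hv1, hv2⟩ | ⟨hv1, hv2⟩
  · -- blocked cell is (q1, p2)
    have hw := hblock (q1, p2)
      (Or.inr ⟨rfl, by omega⟩) (Or.inl ⟨rfl, by omega⟩)
      (by simp only [ne_eq, Prod.mk.injEq, not_and]; intro h; omega)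
    rw [mem_rhombus] at hw
    simp only [Int.abs_eq_natAbs] at hw
    omega
  · -- blocked cell is (p1, q2)
    have hw := hblock (p1, q2)
      (Or.inl ⟨rfl, by omega⟩) (Or.inr ⟨rfl, by omega⟩)
      (by simp only [ne_eq, Prod.mk.injEq, not_and]; intro h; omega)
    rw [mem_rhombus] at hw
    simp only [Int.abs_eq_natAbs] at hw
    omega
end
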